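/- arXiv:2002.09895 — 7 statements merged into one kernel-verified Lean document; each statement's English description precedes it below -/
import Mathlib

section
/- Let ℓ ≥ 2 and let S be a decodable Treeplication subset of T_ℓ. Then at least one of the two immediate subtrees of the root (the left subtree T_{ℓ-1} or the right subtree T'_{ℓ-1}, each a perfect binary tree with ℓ−1 layers) is decodable using only the vertices of S lying in that subtree (i.e., the restriction of S to that subtree is a decodable Treeplication subset of that (ℓ−1)-layer tree). -/
open scoped Classical
noncomputable section

namespace Treeplication

/-- Vertices of the Treeplication tree `T_d` (perfect binary tree with `d` layers),
heap-indexed `1,…,2^d−1`: the root is `1`, the children of `v` are `2v` and `2v+1`,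
and the leaves (layer 1) are `2^{d-1},…,2^d−1`. -/
def treeVerts (d : ℕ) : Finset ℕ := Finset.Ico 1 (2 ^ d)

/-- The vector in `F_2^{2^{d-1}}` associated with vertex `v` of `T_d`: the indicator of
the set of leaves lying in the subtree rooted at `v`. -/
def vecOf (d : ℕ) (v : ℕ) : Fin (2 ^ (d - 1)) → ZMod 2 :=
  fun j => if ∃ t : ℕ, (2 ^ (d - 1) + (j : ℕ)) / 2 ^ t = v then 1 else 0

/-- A Treeplication subset `S` of `T_d` is decodable if the `F_2`-span of the vectors
associated with its vertices is all of `F_2^{2^{d-1}}`. -/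
def TDecodable (d : ℕ) (S : Finset ℕ) : Prop :=
  Submodule.span (ZMod 2) (vecOf d '' (S : Set ℕ)) = ⊤

/-- `w` lies in the subtree rooted at `c` (including `c` itself). -/
def inSubtree (c w : ℕ) : Prop := ∃ t : ℕ, w / 2 ^ t = c

/-- Relabeling of the vertices of the subtree rooted at `c ∈ {2,3}` (an immediate
subtree of the root of `T_ℓ`) as the vertices of a standalone tree `T_{ℓ-1}`:
a vertex `w` at depth `Nat.log2 w` is sent to `w - (c-1)·2^{log2 w - 1}`. -/
def subtreeMap (c w : ℕ) : ℕ := w - (c - 1) * 2 ^ (Nat.log2 w - 1)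

/-! ### Arithmetic helpers -/

lemma div_pow_formula (a m j t : ℕ) (ht : t ≤ m) :
    (a * 2 ^ m + j) / 2 ^ t = a * 2 ^ (m - t) + j / 2 ^ t := by
  have h : a * 2 ^ m = a * 2 ^ (m - t) * 2 ^ t := by
    rw [mul_assoc, ← pow_add]; congr 2; omega
  rw [h, add_comm, Nat.add_mul_div_right _ _ (Nat.two_pow_pos t), add_comm]

lemma quot_small (j m t : ℕ) (hj : j < 2 ^ m) (ht : t ≤ m) : j / 2 ^ t < 2 ^ (m - t) := by
  apply Nat.div_lt_iff_lt_mul (Nat.two_pow_pos t) |>.mpr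
  calc j < 2 ^ m := hj
    _ = 2 ^ (m - t) * 2 ^ t := by rw [← pow_add]; congr 1; omega

lemma keyA (a m p j r : ℕ) (ha : 1 ≤ a) (ha3 : a ≤ 3) (hj : j < 2 ^ m) (hr : r < 2 ^ p)
    (hpm : p ≤ m) : (∃ t, (a * 2 ^ m + j) / 2 ^ t = a * 2 ^ p + r) ↔ j / 2 ^ (m - p) = r := by
  constructor
  · rintro ⟨t, ht⟩
    by_cases htm : t ≤ m
    · rw [div_pow_formula a m j t htm] at ht
      have hq := quot_small j m t hj htm
      have hup : m - t = p := by
        rcases lt_trichotomy (m - t) p with h | h | h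
        · exfalso
          have h2 : 2 ^ ((m - t) + 1) ≤ 2 ^ p := Nat.pow_le_pow_right (by norm_num) h
          rw [pow_succ] at h2
          generalize 2 ^ (m - t) = U at hq ht h2
          generalize 2 ^ p = P at hr ht h2
          generalize j / 2 ^ t = q at hq ht
          interval_cases a <;> omega
        · exact h
        · exfalso
          have h2 : 2 ^ (p + 1) ≤ 2 ^ (m - t) := Nat.pow_le_pow_right (by norm_num) h
          rw [pow_succ] at h2
          generalize 2 ^ (m - t) = U at hq ht h2
          generalize 2 ^ p = P at hr ht h2
          generalize j / 2 ^ t = q at hq ht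
          interval_cases a <;> omega
      have htmp : t = m - p := by omega
      rw [hup] at ht
      subst htmp
      generalize 2 ^ p = P at hr ht
      generalize j / 2 ^ (m - p) = q at ht ⊢
      interval_cases a <;> omega
    · exfalso
      have hv : a * 2 ^ m + j < 2 ^ (m + 2) := by
        have h3 : a * 2 ^ m ≤ 3 * 2 ^ m := Nat.mul_le_mul_right _ ha3
        have h4 : 2 ^ (m + 2) = 4 * 2 ^ m := by ring
        omega
      have hle : (a * 2 ^ m + j) / 2 ^ t ≤ 1 := by
        have h2 : 2 ^ (m + 2) ≤ 2 ^ t * 2 := by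
          rw [← pow_succ]; exact Nat.pow_le_pow_right (by norm_num) (by omega)
        have h1 : a * 2 ^ m + j < 2 * 2 ^ t := by omega
        have := (Nat.div_lt_iff_lt_mul (Nat.two_pow_pos t)).mpr h1
        omega
      have h2p : 1 ≤ 2 ^ p := Nat.one_le_two_pow
      have ha2p : 2 ^ p ≤ a * 2 ^ p := Nat.le_mul_of_pos_left _ (by omega)
      have ha2p' : a ≤ a * 2 ^ p := Nat.le_mul_of_pos_right a (by omega)
      have key1 : a = 1 ∧ 2 ^ p = 1 ∧ r = 0 := by
        generalize a * 2 ^ p = M at ht ha2p ha2p'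
        omega
      obtain ⟨ha1, hp1, hr0⟩ := key1
      subst ha1; subst hr0
      have hlt : 1 * 2 ^ m + j < 2 ^ t := by
        have h2 : 2 * 2 ^ m ≤ 2 ^ t := by
          rw [← pow_succ']; exact Nat.pow_le_pow_right (by norm_num) (by omega)
        omega
      rw [Nat.div_eq_of_lt hlt] at ht
      omega
  · intro h
    refine ⟨m - p, ?_⟩
    rw [div_pow_formula a m j (m - p) (by omega), h]
    have : m - (m - p) = p := by omega
    rw [this]

lemma keyB (a b m p j r : ℕ) (hab : (a = 2 ∧ b = 3) ∨ (a = 3 ∧ b = 2)) (hj : j < 2 ^ m)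
    (hr : r < 2 ^ p) : ¬ ∃ t, (a * 2 ^ m + j) / 2 ^ t = b * 2 ^ p + r := by
  have ha2 : 2 ≤ a := by rcases hab with ⟨h, _⟩ | ⟨h, _⟩ <;> omega
  have ha3 : a ≤ 3 := by rcases hab with ⟨h, _⟩ | ⟨h, _⟩ <;> omega
  rintro ⟨t, ht⟩
  by_cases htm : t ≤ m
  · rw [div_pow_formula a m j t htm] at ht
    have hq := quot_small j m t hj htm
    rcases lt_trichotomy (m - t) p with h | h | h
    · have h2 : 2 ^ ((m - t) + 1) ≤ 2 ^ p := Nat.pow_le_pow_right (by norm_num) h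
      rw [pow_succ] at h2
      generalize 2 ^ (m - t) = U at hq ht h2
      generalize 2 ^ p = P at hr ht h2
      generalize j / 2 ^ t = q at hq ht
      rcases hab with ⟨h1, h2'⟩ | ⟨h1, h2'⟩ <;> subst h1 <;> subst h2' <;> omega
    · rw [h] at ht hq
      generalize 2 ^ p = P at hr ht hq
      generalize j / 2 ^ t = q at hq ht
      rcases hab with ⟨h1, h2'⟩ | ⟨h1, h2'⟩ <;> subst h1 <;> subst h2' <;> omega
    · have h2 : 2 ^ (p + 1) ≤ 2 ^ (m - t) := Nat.pow_le_pow_right (by norm_num) h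
      rw [pow_succ] at h2
      generalize 2 ^ (m - t) = U at hq ht h2
      generalize 2 ^ p = P at hr ht h2
      generalize j / 2 ^ t = q at hq ht
      rcases hab with ⟨h1, h2'⟩ | ⟨h1, h2'⟩ <;> subst h1 <;> subst h2' <;> omega
  · have hle : (a * 2 ^ m + j) / 2 ^ t ≤ 1 := by
      have h2 : 2 ^ (m + 2) ≤ 2 ^ t * 2 := by
        rw [← pow_succ]; exact Nat.pow_le_pow_right (by norm_num) (by omega)
      have h3 : a * 2 ^ m ≤ 3 * 2 ^ m := Nat.mul_le_mul_right _ ha3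
      have h4 : 2 ^ (m + 2) = 4 * 2 ^ m := by ring
      have h1 : a * 2 ^ m + j < 2 * 2 ^ t := by omega
      have := (Nat.div_lt_iff_lt_mul (Nat.two_pow_pos t)).mpr h1
      omega
    have h2p : 1 ≤ 2 ^ p := Nat.one_le_two_pow
    have hb2 : 2 ≤ b := by rcases hab with ⟨_, h⟩ | ⟨_, h⟩ <;> omega
    have : 2 ≤ b * 2 ^ p := le_trans hb2 (Nat.le_mul_of_pos_right b (by omega))
    omega

/-! ### Structural lemmas -/

lemma subtree_cover (w : ℕ) (hw : 2 ≤ w) : inSubtree 2 w ∨ inSubtree 3 w := by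
  induction w using Nat.strong_induction_on with
  | _ w ih =>
    by_cases h4 : w < 4
    · interval_cases w
      · exact Or.inl ⟨0, by norm_num⟩
      · exact Or.inr ⟨0, by norm_num⟩
    · have hw2 : w / 2 < w := Nat.div_lt_self (by omega) (by norm_num)
      have hd : w / 2 / 2 ^ 0 = w / 2 → True := fun _ => trivial
      rcases ih (w / 2) hw2 (by omega) with ⟨t, ht⟩ | ⟨t, ht⟩
      · exact Or.inl ⟨t + 1, by rw [pow_succ', ← Nat.div_div_eq_div_mul]; exact ht⟩
      · exact Or.inr ⟨t + 1, by rw [pow_succ', ← Nat.div_div_eq_div_mul]; exact ht⟩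

lemma inSubtree_elim {c w : ℕ} (h : inSubtree c w) : ∃ k r, r < 2 ^ k ∧ w = c * 2 ^ k + r := by
  obtain ⟨t, ht⟩ := h
  have h1 : c * 2 ^ t ≤ w := by
    calc c * 2 ^ t = w / 2 ^ t * 2 ^ t := by rw [ht]
      _ ≤ w := Nat.div_mul_le_self w _
  have h2 : w < (c + 1) * 2 ^ t := by
    apply (Nat.div_lt_iff_lt_mul (Nat.two_pow_pos t)).mp
    omega
  have h3 : (c + 1) * 2 ^ t = c * 2 ^ t + 2 ^ t := by ring
  exact ⟨t, w - c * 2 ^ t, by omega, by omega⟩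

lemma subtreeMap_eq (c k r : ℕ) (hc : c = 2 ∨ c = 3) (hr : r < 2 ^ k) :
    subtreeMap c (c * 2 ^ k + r) = 2 ^ k + r := by
  have hlog : Nat.log2 (c * 2 ^ k + r) = k + 1 := by
    rw [Nat.log2_eq_log_two]
    apply Nat.log_eq_of_pow_le_of_lt_pow
    · have h1 : 2 ^ (k + 1) = 2 * 2 ^ k := by ring
      rcases hc with rfl | rfl <;> omega
    · have h1 : 2 ^ (k + 2) = 4 * 2 ^ k := by ring
      rcases hc with rfl | rfl <;> omega
  unfold subtreeMap
  rw [hlog]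
  simp only [Nat.add_sub_cancel]
  rcases hc with rfl | rfl <;> omega

lemma depth_le {n c k r : ℕ} (hc : c = 2 ∨ c = 3) (hr : r < 2 ^ k)
    (hw : c * 2 ^ k + r < 2 ^ (n + 2)) : k ≤ n := by
  have h1 : 2 ^ (k + 1) < 2 ^ (n + 2) := by
    have h2 : 2 ^ (k + 1) = 2 * 2 ^ k := by ring
    rcases hc with rfl | rfl <;> omega
  have := (Nat.pow_lt_pow_iff_right (a := 2) (by norm_num)).mp h1
  omega

/-! ### Vector projection lemmas -/

lemma vec_left_of_left (n k r : ℕ) (hk : k ≤ n) (hr : r < 2 ^ k) (j : Fin (2 ^ n))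
    (h : (j : ℕ) < 2 ^ (n + 1)) :
    vecOf (n + 2) (2 * 2 ^ k + r) ⟨(j : ℕ), h⟩ = vecOf (n + 1) (2 ^ k + r) j := by
  show (if ∃ t : ℕ, (2 ^ (n + 1) + (j : ℕ)) / 2 ^ t = 2 * 2 ^ k + r then (1 : ZMod 2) else 0)
      = if ∃ t : ℕ, (2 ^ n + (j : ℕ)) / 2 ^ t = 2 ^ k + r then 1 else 0
  have h1 : (∃ t : ℕ, (2 ^ (n + 1) + (j : ℕ)) / 2 ^ t = 2 * 2 ^ k + r)
      ↔ (j : ℕ) / 2 ^ (n - k) = r := by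
    rw [show (2 : ℕ) ^ (n + 1) = 2 * 2 ^ n from by ring]
    exact keyA 2 n k j r (by norm_num) (by norm_num) j.isLt hr hk
  have h2 : (∃ t : ℕ, (2 ^ n + (j : ℕ)) / 2 ^ t = 2 ^ k + r)
      ↔ (j : ℕ) / 2 ^ (n - k) = r := by
    have := keyA 1 n k j r (by norm_num) (by norm_num) j.isLt hr hk
    simpa using this
  rw [if_congr (h1.trans h2.symm) rfl rfl]

lemma vec_right_of_right (n k r : ℕ) (hk : k ≤ n) (hr : r < 2 ^ k) (j : Fin (2 ^ n))
    (h : 2 ^ n + (j : ℕ) < 2 ^ (n + 1)) :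
    vecOf (n + 2) (3 * 2 ^ k + r) ⟨2 ^ n + (j : ℕ), h⟩ = vecOf (n + 1) (2 ^ k + r) j := by
  show (if ∃ t : ℕ, (2 ^ (n + 1) + (2 ^ n + (j : ℕ))) / 2 ^ t = 3 * 2 ^ k + r
      then (1 : ZMod 2) else 0)
      = if ∃ t : ℕ, (2 ^ n + (j : ℕ)) / 2 ^ t = 2 ^ k + r then 1 else 0
  have h1 : (∃ t : ℕ, (2 ^ (n + 1) + (2 ^ n + (j : ℕ))) / 2 ^ t = 3 * 2 ^ k + r)
      ↔ (j : ℕ) / 2 ^ (n - k) = r := by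
    rw [show (2 : ℕ) ^ (n + 1) + (2 ^ n + (j : ℕ)) = 3 * 2 ^ n + (j : ℕ) from by ring]
    exact keyA 3 n k j r (by norm_num) (by norm_num) j.isLt hr hk
  have h2 : (∃ t : ℕ, (2 ^ n + (j : ℕ)) / 2 ^ t = 2 ^ k + r)
      ↔ (j : ℕ) / 2 ^ (n - k) = r := by
    have := keyA 1 n k j r (by norm_num) (by norm_num) j.isLt hr hk
    simpa using this
  rw [if_congr (h1.trans h2.symm) rfl rfl]

lemma vec_right_of_left (n k r : ℕ) (hr : r < 2 ^ k) (j : Fin (2 ^ n))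
    (h : 2 ^ n + (j : ℕ) < 2 ^ (n + 1)) :
    vecOf (n + 2) (2 * 2 ^ k + r) ⟨2 ^ n + (j : ℕ), h⟩ = 0 := by
  show (if ∃ t : ℕ, (2 ^ (n + 1) + (2 ^ n + (j : ℕ))) / 2 ^ t = 2 * 2 ^ k + r
      then (1 : ZMod 2) else 0) = 0
  rw [if_neg, ]
  rw [show (2 : ℕ) ^ (n + 1) + (2 ^ n + (j : ℕ)) = 3 * 2 ^ n + (j : ℕ) from by ring]
  exact keyB 3 2 n k j r (Or.inr ⟨rfl, rfl⟩) j.isLt hr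

lemma vec_left_of_right (n k r : ℕ) (hr : r < 2 ^ k) (j : Fin (2 ^ n))
    (h : (j : ℕ) < 2 ^ (n + 1)) :
    vecOf (n + 2) (3 * 2 ^ k + r) ⟨(j : ℕ), h⟩ = 0 := by
  show (if ∃ t : ℕ, (2 ^ (n + 1) + (j : ℕ)) / 2 ^ t = 3 * 2 ^ k + r
      then (1 : ZMod 2) else 0) = 0
  rw [if_neg]
  rw [show (2 : ℕ) ^ (n + 1) = 2 * 2 ^ n from by ring]
  exact keyB 2 3 n k j r (Or.inl ⟨rfl, rfl⟩) j.isLt hr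

lemma vec_root (n : ℕ) (i : Fin (2 ^ (n + 1))) : vecOf (n + 2) 1 i = 1 := by
  show (if ∃ t : ℕ, (2 ^ (n + 1) + (i : ℕ)) / 2 ^ t = 1 then (1 : ZMod 2) else 0) = 1
  rw [if_pos]
  refine ⟨n + 1, ?_⟩
  have h1 : 2 ^ (n + 1) + (i : ℕ) < 2 * 2 ^ (n + 1) := by have := i.isLt; omega
  have h2 : 1 * 2 ^ (n + 1) ≤ 2 ^ (n + 1) + (i : ℕ) := by omega
  exact Nat.div_eq_of_lt_le h2 (by omega)

/-! ### Dual functional from non-decodability -/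

lemma exists_functional (n : ℕ) (X : Finset ℕ) (h : ¬ TDecodable (n + 1) X) :
    ∃ f : Module.Dual (ZMod 2) (Fin (2 ^ n) → ZMod 2), f ≠ 0 ∧
      ∀ x ∈ vecOf (n + 1) '' (X : Set ℕ), f x = 0 := by
  rw [TDecodable] at h
  have hlt : Submodule.span (ZMod 2) (vecOf (n + 1) '' (X : Set ℕ)) < ⊤ :=
    lt_top_iff_ne_top.mpr h
  obtain ⟨f, hf0, hfmap⟩ := Submodule.exists_dual_map_eq_bot_of_lt_top hlt inferInstance
  refine ⟨f, hf0, fun x hx => ?_⟩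
  have hmem : f x ∈ Submodule.map f (Submodule.span (ZMod 2) (vecOf (n + 1) '' (X : Set ℕ))) :=
    Submodule.mem_map_of_mem (Submodule.subset_span hx)
  rw [hfmap] at hmem
  exact (Submodule.mem_bot _).mp hmem

lemma zmod2_ne_zero {x : ZMod 2} (h : x ≠ 0) : x = 1 := by
  revert h; revert x; decide

/-- If a Treeplication subset of `T_ℓ` (`ℓ ≥ 2`) is decodable, then at
least one of the two immediate subtrees of the root is decodable using only the vertices
of `S` lying in that subtree. -/
theorem subtree_decodable_of_decodable (ℓ : ℕ) (hℓ : 2 ≤ ℓ) (S : Finset ℕ)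
    (hS : S ⊆ treeVerts ℓ) (hdec : TDecodable ℓ S) :
    TDecodable (ℓ - 1) ((S.filter (fun w => inSubtree 2 w)).image (subtreeMap 2)) ∨
    TDecodable (ℓ - 1) ((S.filter (fun w => inSubtree 3 w)).image (subtreeMap 3)) := by
  obtain ⟨n, rfl⟩ : ∃ n, ℓ = n + 2 := ⟨ℓ - 2, by omega⟩
  by_contra hcon
  push_neg at hcon
  obtain ⟨hL, hR⟩ := hcon
  obtain ⟨fL, hfL0, hfLv⟩ := exists_functional n _ hL
  obtain ⟨fR, hfR0, hfRv⟩ := exists_functional n _ hR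
  have h2n : (2 : ℕ) ^ (n + 1) = 2 ^ n + 2 ^ n := by ring
  -- embeddings and projections
  let eL : Fin (2 ^ n) → Fin (2 ^ (n + 1)) := fun j => ⟨(j : ℕ), by have := j.isLt; omega⟩
  let eR : Fin (2 ^ n) → Fin (2 ^ (n + 1)) := fun j => ⟨2 ^ n + (j : ℕ), by have := j.isLt; omega⟩
  let πL : (Fin (2 ^ (n + 1)) → ZMod 2) →ₗ[ZMod 2] (Fin (2 ^ n) → ZMod 2) :=
    LinearMap.funLeft (ZMod 2) (ZMod 2) eL
  let πR : (Fin (2 ^ (n + 1)) → ZMod 2) →ₗ[ZMod 2] (Fin (2 ^ n) → ZMod 2) :=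
    LinearMap.funLeft (ZMod 2) (ZMod 2) eR
  -- the all-ones vector on the half space
  let ones : Fin (2 ^ n) → ZMod 2 := fun _ => 1
  -- projections of the vector of a vertex in an immediate subtree
  have projL2 : ∀ w ∈ S, inSubtree 2 w →
      πL (vecOf (n + 2) w) = vecOf (n + 1) (subtreeMap 2 w) ∧ πR (vecOf (n + 2) w) = 0 := by
    intro w hw hsub
    obtain ⟨k, r, hr, rfl⟩ := inSubtree_elim hsub
    have hwT := hS hw
    rw [treeVerts, Finset.mem_Ico] at hwT
    have hk : k ≤ n := depth_le (Or.inl rfl) hr hwT.2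
    rw [subtreeMap_eq 2 k r (Or.inl rfl) hr]
    constructor
    · funext j
      exact vec_left_of_left n k r hk hr j _
    · funext j
      exact vec_right_of_left n k r hr j _
  have projR3 : ∀ w ∈ S, inSubtree 3 w →
      πR (vecOf (n + 2) w) = vecOf (n + 1) (subtreeMap 3 w) ∧ πL (vecOf (n + 2) w) = 0 := by
    intro w hw hsub
    obtain ⟨k, r, hr, rfl⟩ := inSubtree_elim hsub
    have hwT := hS hw
    rw [treeVerts, Finset.mem_Ico] at hwT
    have hk : k ≤ n := depth_le (Or.inr rfl) hr hwT.2
    rw [subtreeMap_eq 3 k r (Or.inr rfl) hr]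
    constructor
    · funext j
      exact vec_right_of_right n k r hk hr j _
    · funext j
      exact vec_left_of_right n k r hr j _
  have projRoot : πL (vecOf (n + 2) 1) = ones ∧ πR (vecOf (n + 2) 1) = ones := by
    constructor <;> · funext j; exact vec_root n _
  -- membership of projected vectors in the subtree generating sets
  have memL : ∀ w ∈ S, inSubtree 2 w → fL (vecOf (n + 1) (subtreeMap 2 w)) = 0 := by
    intro w hw hsub
    exact hfLv _ ⟨subtreeMap 2 w, by
      simp only [Finset.coe_image, Finset.coe_filter, Set.mem_image, Set.mem_setOf_eq]
      exact ⟨w, ⟨hw, hsub⟩, rfl⟩, rfl⟩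
  have memR : ∀ w ∈ S, inSubtree 3 w → fR (vecOf (n + 1) (subtreeMap 3 w)) = 0 := by
    intro w hw hsub
    exact hfRv _ ⟨subtreeMap 3 w, by
      simp only [Finset.coe_image, Finset.coe_filter, Set.mem_image, Set.mem_setOf_eq]
      exact ⟨w, ⟨hw, hsub⟩, rfl⟩, rfl⟩
  -- nonzero witnesses
  obtain ⟨yL, hyL⟩ : ∃ y, fL y ≠ 0 := by
    by_contra h; push_neg at h
    exact hfL0 (LinearMap.ext fun y => by simpa using h y)
  obtain ⟨yR, hyR⟩ : ∃ y, fR y ≠ 0 := by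
    by_contra h; push_neg at h
    exact hfR0 (LinearMap.ext fun y => by simpa using h y)
  -- extension-by-zero vectors
  let xL : Fin (2 ^ (n + 1)) → ZMod 2 :=
    fun i => if h : (i : ℕ) < 2 ^ n then yL ⟨(i : ℕ), h⟩ else 0
  let xR : Fin (2 ^ (n + 1)) → ZMod 2 :=
    fun i => if h : (i : ℕ) < 2 ^ n then 0 else yR ⟨(i : ℕ) - 2 ^ n, by have := i.isLt; omega⟩
  have hxLL : πL xL = yL := by
    funext j
    show xL (eL j) = yL j
    simp only [xL, eL]
    rw [dif_pos j.isLt]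
  have hxLR : πR xL = 0 := by
    funext j
    show xL (eR j) = 0
    simp only [xL, eR]
    rw [dif_neg (by omega)]
  have hxRL : πL xR = 0 := by
    funext j
    show xR (eL j) = 0
    simp only [xR, eL]
    rw [dif_pos j.isLt]
  have hxRR : πR xR = yR := by
    funext j
    show xR (eR j) = yR j
    simp only [xR, eR]
    rw [dif_neg (by omega)]
    congr 1
    ext
    simp
  -- the contradiction machine: a nonzero functional vanishing on all of span = ⊤
  have contra : ∀ φ : Module.Dual (ZMod 2) (Fin (2 ^ (n + 1)) → ZMod 2),
      (∀ w ∈ S, φ (vecOf (n + 2) w) = 0) → φ = 0 := by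
    intro φ hφ
    have hker : Submodule.span (ZMod 2) (vecOf (n + 2) '' (S : Set ℕ)) ≤ LinearMap.ker φ := by
      rw [Submodule.span_le]
      rintro x ⟨w, hw, rfl⟩
      exact hφ w hw
    rw [hdec, top_le_iff] at hker
    exact LinearMap.ker_eq_top.mp hker
  -- vertices of S are the root or in one of the subtrees
  have cover : ∀ w ∈ S, w = 1 ∨ inSubtree 2 w ∨ inSubtree 3 w := by
    intro w hw
    have hwT := hS hw
    rw [treeVerts, Finset.mem_Ico] at hwT
    by_cases h1 : w = 1
    · exact Or.inl h1
    · exact Or.inr (subtree_cover w (by omega))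
  -- case analysis on the values of the functionals at the all-ones vector
  by_cases hfo : fL ones = 0
  · -- φ = fL ∘ πL kills everything
    have : fL.comp πL = 0 := by
      apply contra
      intro w hw
      rcases cover w hw with rfl | hsub | hsub
      · show fL (πL (vecOf (n + 2) 1)) = 0
        rw [projRoot.1, hfo]
      · show fL (πL (vecOf (n + 2) w)) = 0
        rw [(projL2 w hw hsub).1]
        exact memL w hw hsub
      · show fL (πL (vecOf (n + 2) w)) = 0
        rw [(projR3 w hw hsub).2, map_zero]
    have : fL yL = 0 := by
      have h := congrArg (fun g => g xL) this
      simpa [hxLL] using h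
    exact hyL this
  · by_cases hgo : fR ones = 0
    · have : fR.comp πR = 0 := by
        apply contra
        intro w hw
        rcases cover w hw with rfl | hsub | hsub
        · show fR (πR (vecOf (n + 2) 1)) = 0
          rw [projRoot.2, hgo]
        · show fR (πR (vecOf (n + 2) w)) = 0
          rw [(projL2 w hw hsub).2, map_zero]
        · show fR (πR (vecOf (n + 2) w)) = 0
          rw [(projR3 w hw hsub).1]
          exact memR w hw hsub
      have : fR yR = 0 := by
        have h := congrArg (fun g => g xR) this
        simpa [hxRR] using h
      exact hyR this
    · -- both are 1; use the sum
      have hsum : fL ones + fR ones = 0 := by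
        rw [zmod2_ne_zero hfo, zmod2_ne_zero hgo]
        decide
      have : fL.comp πL + fR.comp πR = 0 := by
        apply contra
        intro w hw
        rcases cover w hw with rfl | hsub | hsub
        · show fL (πL (vecOf (n + 2) 1)) + fR (πR (vecOf (n + 2) 1)) = 0
          rw [projRoot.1, projRoot.2]
          exact hsum
        · show fL (πL (vecOf (n + 2) w)) + fR (πR (vecOf (n + 2) w)) = 0
          rw [(projL2 w hw hsub).1, (projL2 w hw hsub).2, map_zero, memL w hw hsub, add_zero]
        · show fL (πL (vecOf (n + 2) w)) + fR (πR (vecOf (n + 2) w)) = 0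
          rw [(projR3 w hw hsub).1, (projR3 w hw hsub).2, map_zero, memR w hw hsub, zero_add]
      have : fL yL = 0 := by
        have h := congrArg (fun g => g xL) this
        simpa [hxLL, hxLR] using h
      exact hyL this


end Treeplication
end
end

section
/- For all integers d ≥ 2 and j ≥ 0, r_{d,j} = Σ_{l=0}^{j} D_{d-1,l}·D_{d-1,j-l} + Σ_{l=0}^{j} D_{d-1,l}·D_{d-1,j-l-1}, where by convention D_{d-1,m} = 0 whenever m < 0 or m > 2^{d-2} − 1. -/
open scoped Classical
noncomputable section

namespace Treeplication

/-- `y` is a leaf of `T_d`. -/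
def IsLeaf (d y : ℕ) : Prop := 2 ^ (d - 1) ≤ y ∧ y < 2 ^ d

/-- `Dnum d j` : the number of decodable Treeplication subsets of `T_d` with exactly
`2^{d-1}+j` vertices (automatically `0` for `j < 0` or `j > 2^{d-1}-1`). -/
def Dnum (d : ℕ) (j : ℤ) : ℕ :=
  ((treeVerts d).powerset.filter
    (fun S => (S.card : ℤ) = 2 ^ (d - 1) + j ∧ TDecodable d S)).card

/-- `tnum d j` : the number of decodable Treeplication subsets of `T_d` with exactly
`2^{d-1}+j` vertices that contain the root and are not decodable after removing it. -/
def tnum (d : ℕ) (j : ℤ) : ℕ :=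
  ((treeVerts d).powerset.filter
    (fun S => (S.card : ℤ) = 2 ^ (d - 1) + j ∧ TDecodable d S ∧
      1 ∈ S ∧ ¬ TDecodable d (S.erase 1))).card

/-- `rnum d j` : the number of the remaining decodable Treeplication subsets of `T_d`
with exactly `2^{d-1}+j` vertices (those not containing the root, or still decodable
after removing the root); `rnum d j = Dnum d j − tnum d j`. -/
def rnum (d : ℕ) (j : ℤ) : ℕ :=
  ((treeVerts d).powerset.filter
    (fun S => (S.card : ℤ) = 2 ^ (d - 1) + j ∧ TDecodable d S ∧
      ¬ (1 ∈ S ∧ ¬ TDecodable d (S.erase 1)))).card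


def embL (w : ℕ) : ℕ := w + 2 ^ Nat.log 2 w
def embR (w : ℕ) : ℕ := w + 2 ^ (Nat.log 2 w + 1)

lemma pow_log_le (w : ℕ) (hw : 1 ≤ w) : 2 ^ Nat.log 2 w ≤ w :=
  Nat.pow_log_le_self 2 (by omega)

lemma lt_pow_log (w : ℕ) : w < 2 ^ (Nat.log 2 w + 1) :=
  Nat.lt_pow_succ_log_self (by norm_num) w

lemma log_embL (w : ℕ) (hw : 1 ≤ w) : Nat.log 2 (embL w) = Nat.log 2 w + 1 := by
  apply Nat.log_eq_of_pow_le_of_lt_pow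
  · have := pow_log_le w hw; unfold embL; omega
  · have := lt_pow_log w; unfold embL; ring_nf; have := pow_log_le w hw; omega

lemma log_embR (w : ℕ) (hw : 1 ≤ w) : Nat.log 2 (embR w) = Nat.log 2 w + 1 := by
  apply Nat.log_eq_of_pow_le_of_lt_pow
  · have := pow_log_le w hw; unfold embR; omega
  · have := lt_pow_log w; unfold embR; ring_nf
    have h2 : 2 ^ (Nat.log 2 w + 1 + 1) = 2 ^ (Nat.log 2 w + 1) + 2 ^ (Nat.log 2 w + 1) := by ring
    omega

lemma two_le_embL (w : ℕ) (hw : 1 ≤ w) : 2 ≤ embL w := by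
  have := pow_log_le w hw; unfold embL; have : 1 ≤ 2 ^ Nat.log 2 w := Nat.one_le_two_pow; omega

lemma two_le_embR (w : ℕ) (hw : 1 ≤ w) : 2 ≤ embR w := by
  unfold embR; have : 1 ≤ 2 ^ (Nat.log 2 w + 1) := Nat.one_le_two_pow; omega

lemma embL_lt_pow {w n : ℕ} (hw : 1 ≤ w) (h : w < 2 ^ n) : embL w < 2 ^ (n + 1) := by
  have hl : Nat.log 2 w < n := Nat.log_lt_of_lt_pow (by omega) h
  have h1 : 2 ^ (Nat.log 2 w + 1) ≤ 2 ^ n := Nat.pow_le_pow_right (by norm_num) hl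
  have := lt_pow_log w
  have h2 : (2:ℕ) ^ (n+1) = 2 ^ n + 2 ^ n := by ring
  unfold embL; omega

lemma embR_lt_pow {w n : ℕ} (hw : 1 ≤ w) (h : w < 2 ^ n) : embR w < 2 ^ (n + 1) := by
  have hl : Nat.log 2 w < n := Nat.log_lt_of_lt_pow (by omega) h
  have h1 : 2 ^ (Nat.log 2 w + 1) ≤ 2 ^ n := Nat.pow_le_pow_right (by norm_num) hl
  have h2 : (2:ℕ) ^ (n+1) = 2 ^ n + 2 ^ n := by ring
  unfold embR; omega

lemma embL_lt_3pow (w : ℕ) (hw : 1 ≤ w) : embL w < 3 * 2 ^ Nat.log 2 w := by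
  have := lt_pow_log w
  have h2 : (2:ℕ) ^ (Nat.log 2 w + 1) = 2 ^ Nat.log 2 w + 2 ^ Nat.log 2 w := by ring
  unfold embL; omega

lemma embR_ge_3pow (w : ℕ) (hw : 1 ≤ w) : 3 * 2 ^ Nat.log 2 w ≤ embR w := by
  have := pow_log_le w hw
  have h2 : (2:ℕ) ^ (Nat.log 2 w + 1) = 2 ^ Nat.log 2 w + 2 ^ Nat.log 2 w := by ring
  unfold embR; omega

lemma embL_ne_embR (w u : ℕ) (hw : 1 ≤ w) (hu : 1 ≤ u) : embL w ≠ embR u := by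
  intro h
  have h1 := log_embL w hw
  have h2 := log_embR u hu
  rw [h] at h1
  have heq : Nat.log 2 w = Nat.log 2 u := by omega
  have ha := embL_lt_3pow w hw
  have hb := embR_ge_3pow u hu
  rw [heq] at ha; omega

lemma embL_inj {w u : ℕ} (hw : 1 ≤ w) (hu : 1 ≤ u) (h : embL w = embL u) : w = u := by
  have h1 := log_embL w hw
  have h2 := log_embL u hu
  rw [h] at h1
  have : Nat.log 2 w = Nat.log 2 u := by omega
  unfold embL at h; rw [this] at h; omega

lemma embR_inj {w u : ℕ} (hw : 1 ≤ w) (hu : 1 ≤ u) (h : embR w = embR u) : w = u := by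
  have h1 := log_embR w hw
  have h2 := log_embR u hu
  rw [h] at h1
  have : Nat.log 2 w = Nat.log 2 u := by omega
  unfold embR at h; rw [this] at h; omega

lemma log_pow_add {k j : ℕ} (hj : j < 2 ^ k) : Nat.log 2 (2 ^ k + j) = k := by
  apply Nat.log_eq_of_pow_le_of_lt_pow (by omega)
  have h := pow_succ 2 k
  omega

/-- every vertex `v ≥ 2` is `embL w` or `embR w` for some `w ≥ 1`, with `w` controlled. -/
lemma exists_emb {v : ℕ} (hv : 2 ≤ v) :
    ∃ w, 1 ≤ w ∧ (∀ n, v < 2 ^ (n+1) → w < 2 ^ n) ∧ (embL w = v ∨ embR w = v) := by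
  have hk1 : 1 ≤ Nat.log 2 v := Nat.le_log_of_pow_le (by norm_num) (show 2^1 ≤ v by omega)
  obtain ⟨m, hm⟩ : ∃ m, Nat.log 2 v = m + 1 := ⟨Nat.log 2 v - 1, by omega⟩
  have hle := pow_log_le v (by omega)
  have hlt := lt_pow_log v
  rw [hm] at hle hlt
  have hp1 := pow_succ 2 m
  have hp2 := pow_succ 2 (m+1)
  have hbound : ∀ w, w < 2 ^ (m+1) → ∀ n, v < 2 ^ (n+1) → w < 2 ^ n := by
    intro w hw n hn
    have hmn : m + 1 ≤ n := by
      by_contra hcon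
      have : 2 ^ (n+1) ≤ 2 ^ (m+1) := Nat.pow_le_pow_right (by norm_num) (by omega)
      omega
    exact lt_of_lt_of_le hw (Nat.pow_le_pow_right (by norm_num) hmn)
  by_cases hc : v < 3 * 2 ^ m
  · refine ⟨v - 2 ^ m, by omega, hbound _ (by omega), Or.inl ?_⟩
    have hw : v - 2 ^ m = 2 ^ m + (v - 2 ^ (m+1)) := by omega
    have hlog : Nat.log 2 (v - 2 ^ m) = m := by
      rw [hw]; exact log_pow_add (by omega)
    unfold embL; rw [hlog]; omega
  · refine ⟨v - 2 ^ (m+1), by omega, hbound _ (by omega), Or.inr ?_⟩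
    have hw : v - 2 ^ (m+1) = 2 ^ m + (v - 3 * 2 ^ m) := by omega
    have hlog : Nat.log 2 (v - 2 ^ (m+1)) = m := by
      rw [hw]; exact log_pow_add (by omega)
    unfold embR; rw [hlog]; omega

lemma log_div {a t : ℕ} (ha : 1 ≤ a) (ht : t ≤ Nat.log 2 a) :
    Nat.log 2 (a / 2 ^ t) = Nat.log 2 a - t := by
  set k := Nat.log 2 a
  have hle := pow_log_le a ha
  have hlt := lt_pow_log a
  apply Nat.log_eq_of_pow_le_of_lt_pow
  · have : 2 ^ (k - t) = 2 ^ k / 2 ^ t := by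
      rw [Nat.pow_div ht (by norm_num)]
    rw [this]; exact Nat.div_le_div_right hle
  · rw [Nat.div_lt_iff_lt_mul (Nat.two_pow_pos t)]
    calc a < 2 ^ (k+1) := hlt
    _ ≤ 2 ^ (k - t + 1) * 2 ^ t := by rw [← pow_add]; exact Nat.pow_le_pow_right (by norm_num) (by omega)

lemma div_pos_of {a t : ℕ} (ha : 1 ≤ a) (ht : t ≤ Nat.log 2 a) : 1 ≤ a / 2 ^ t := by
  have := pow_log_le a ha
  have h : 2 ^ t ≤ a := le_trans (Nat.pow_le_pow_right (by norm_num) ht) this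
  exact Nat.one_le_div_iff (Nat.two_pow_pos t) |>.mpr h

lemma embL_div {a t : ℕ} (ha : 1 ≤ a) (ht : t ≤ Nat.log 2 a) :
    embL a / 2 ^ t = embL (a / 2 ^ t) := by
  have hsp : (2:ℕ) ^ Nat.log 2 a = 2 ^ t * 2 ^ (Nat.log 2 a - t) := by
    rw [← pow_add]; congr 1; omega
  unfold embL
  rw [log_div ha ht, hsp, Nat.add_mul_div_left _ _ (Nat.two_pow_pos t)]

lemma embR_div {a t : ℕ} (ha : 1 ≤ a) (ht : t ≤ Nat.log 2 a) :
    embR a / 2 ^ t = embR (a / 2 ^ t) := by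
  have hsp : (2:ℕ) ^ (Nat.log 2 a + 1) = 2 ^ t * 2 ^ (Nat.log 2 a - t + 1) := by
    rw [← pow_add]; congr 1; omega
  unfold embR
  rw [log_div ha ht, hsp, Nat.add_mul_div_left _ _ (Nat.two_pow_pos t)]

lemma embL_div_le {a t : ℕ} (ha : 1 ≤ a) (ht : Nat.log 2 a < t) : embL a / 2 ^ t ≤ 1 := by
  have h1 : embL a < 2 ^ (Nat.log 2 a + 1 + 1) := embL_lt_pow ha (lt_pow_log a)
  have h2 := pow_succ 2 (Nat.log 2 a + 1)
  have h3 : (2:ℕ) ^ (Nat.log 2 a + 1) ≤ 2 ^ t := Nat.pow_le_pow_right (by norm_num) (by omega)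
  have h4 := (Nat.div_lt_iff_lt_mul (show 0 < 2^t from Nat.two_pow_pos t)).mpr
    (show embL a < 2 * 2^t by omega)
  omega

lemma embR_div_le {a t : ℕ} (ha : 1 ≤ a) (ht : Nat.log 2 a < t) : embR a / 2 ^ t ≤ 1 := by
  have h1 : embR a < 2 ^ (Nat.log 2 a + 1 + 1) := embR_lt_pow ha (lt_pow_log a)
  have h2 := pow_succ 2 (Nat.log 2 a + 1)
  have h3 : (2:ℕ) ^ (Nat.log 2 a + 1) ≤ 2 ^ t := Nat.pow_le_pow_right (by norm_num) (by omega)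
  have h4 := (Nat.div_lt_iff_lt_mul (show 0 < 2^t from Nat.two_pow_pos t)).mpr
    (show embR a < 2 * 2^t by omega)
  omega

lemma anc_LL {a w : ℕ} (ha : 1 ≤ a) (hw : 1 ≤ w) :
    (∃ t, embL a / 2 ^ t = embL w) ↔ (∃ t, a / 2 ^ t = w) := by
  constructor
  · rintro ⟨t, h⟩
    have h2 := two_le_embL w hw
    have ht : t ≤ Nat.log 2 a := by
      by_contra hc
      have := embL_div_le (t := t) ha (by omega); omega
    rw [embL_div ha ht] at h
    exact ⟨t, embL_inj (div_pos_of ha ht) hw h⟩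
  · rintro ⟨t, h⟩
    have ht : t ≤ Nat.log 2 a := by
      by_contra hc
      have : a < 2 ^ t := lt_of_lt_of_le (lt_pow_log a)
        (Nat.pow_le_pow_right (by norm_num) (by omega))
      rw [Nat.div_eq_of_lt this] at h; omega
    exact ⟨t, by rw [embL_div ha ht, h]⟩

lemma anc_RR {a w : ℕ} (ha : 1 ≤ a) (hw : 1 ≤ w) :
    (∃ t, embR a / 2 ^ t = embR w) ↔ (∃ t, a / 2 ^ t = w) := by
  constructor
  · rintro ⟨t, h⟩
    have h2 := two_le_embR w hw
    have ht : t ≤ Nat.log 2 a := by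
      by_contra hc
      have := embR_div_le (t := t) ha (by omega); omega
    rw [embR_div ha ht] at h
    exact ⟨t, embR_inj (div_pos_of ha ht) hw h⟩
  · rintro ⟨t, h⟩
    have ht : t ≤ Nat.log 2 a := by
      by_contra hc
      have : a < 2 ^ t := lt_of_lt_of_le (lt_pow_log a)
        (Nat.pow_le_pow_right (by norm_num) (by omega))
      rw [Nat.div_eq_of_lt this] at h; omega
    exact ⟨t, by rw [embR_div ha ht, h]⟩

lemma anc_RL {a w : ℕ} (ha : 1 ≤ a) (hw : 1 ≤ w) : ¬ ∃ t, embR a / 2 ^ t = embL w := by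
  rintro ⟨t, h⟩
  have h2 := two_le_embL w hw
  have ht : t ≤ Nat.log 2 a := by
    by_contra hc
    have := embR_div_le (t := t) ha (by omega); omega
  rw [embR_div ha ht] at h
  exact embL_ne_embR w (a / 2^t) hw (div_pos_of ha ht) h.symm

lemma anc_LR {a w : ℕ} (ha : 1 ≤ a) (hw : 1 ≤ w) : ¬ ∃ t, embL a / 2 ^ t = embR w := by
  rintro ⟨t, h⟩
  have h2 := two_le_embR w hw
  have ht : t ≤ Nat.log 2 a := by
    by_contra hc
    have := embL_div_le (t := t) ha (by omega); omega
  rw [embL_div ha ht] at h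
  exact embL_ne_embR (a / 2^t) w (div_pos_of ha ht) hw h


def iotaL (m : ℕ) : (Fin (2^m) → ZMod 2) →ₗ[ZMod 2] (Fin (2^(m+1)) → ZMod 2) where
  toFun f := fun j => if h : (j : ℕ) < 2 ^ m then f ⟨j, h⟩ else 0
  map_add' f g := by funext j; by_cases h : (j:ℕ) < 2^m <;> simp [h]
  map_smul' c f := by funext j; by_cases h : (j:ℕ) < 2^m <;> simp [h]

def iotaR (m : ℕ) : (Fin (2^m) → ZMod 2) →ₗ[ZMod 2] (Fin (2^(m+1)) → ZMod 2) where
  toFun f := fun j => if h : (j : ℕ) < 2 ^ m then 0 else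
    f ⟨(j:ℕ) - 2^m, by have h1 := j.2; have h2 := pow_succ 2 m; omega⟩
  map_add' f g := by funext j; by_cases h : (j:ℕ) < 2^m <;> simp [h]
  map_smul' c f := by funext j; by_cases h : (j:ℕ) < 2^m <;> simp [h]

def projL (m : ℕ) : (Fin (2^(m+1)) → ZMod 2) →ₗ[ZMod 2] (Fin (2^m) → ZMod 2) where
  toFun f := fun i => f ⟨i, by have h1 := i.2; have h2 := pow_succ 2 m; omega⟩
  map_add' f g := rfl
  map_smul' c f := rfl

def projR (m : ℕ) : (Fin (2^(m+1)) → ZMod 2) →ₗ[ZMod 2] (Fin (2^m) → ZMod 2) where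
  toFun f := fun i => f ⟨2^m + i, by have h1 := i.2; have h2 := pow_succ 2 m; omega⟩
  map_add' f g := rfl
  map_smul' c f := rfl

lemma projL_iotaL (m : ℕ) (f : Fin (2^m) → ZMod 2) : projL m (iotaL m f) = f := by
  funext i; simp [projL, iotaL, i.2]

lemma projR_iotaR (m : ℕ) (f : Fin (2^m) → ZMod 2) : projR m (iotaR m f) = f := by
  funext i
  have h : ¬ (2^m + (i:ℕ) < 2^m) := by omega
  simp only [projR, iotaR, LinearMap.coe_mk, AddHom.coe_mk, dif_neg h]
  congr 1
  exact Fin.ext (by simp)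

lemma projR_iotaL (m : ℕ) (f : Fin (2^m) → ZMod 2) : projR m (iotaL m f) = 0 := by
  funext i
  have h : ¬ (2^m + (i:ℕ) < 2^m) := by omega
  simp [projR, iotaL, h]

lemma projL_iotaR (m : ℕ) (f : Fin (2^m) → ZMod 2) : projL m (iotaR m f) = 0 := by
  funext i; simp [projL, iotaR, i.2]

lemma iota_decomp (m : ℕ) (x : Fin (2^(m+1)) → ZMod 2) :
    iotaL m (projL m x) + iotaR m (projR m x) = x := by
  funext j
  by_cases h : (j:ℕ) < 2^m
  · simp only [Pi.add_apply, iotaL, iotaR, projL, projR, LinearMap.coe_mk, AddHom.coe_mk,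
      dif_pos h, dif_neg (show ¬ ((j:ℕ) < 2^m) → False from fun _ => by omega)]
    rw [add_zero]
  · simp only [Pi.add_apply, iotaL, iotaR, projL, projR, LinearMap.coe_mk, AddHom.coe_mk]
    rw [dif_neg h, dif_neg h, zero_add]
    congr 1
    exact Fin.ext (by simp; omega)

lemma span_split (m : ℕ) (XA XB : Set (Fin (2^m) → ZMod 2)) :
    Submodule.span (ZMod 2) (iotaL m '' XA ∪ iotaR m '' XB) = ⊤ ↔
      Submodule.span (ZMod 2) XA = ⊤ ∧ Submodule.span (ZMod 2) XB = ⊤ := by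
  constructor
  · intro h
    have hL : Submodule.span (ZMod 2) ((projL m) '' (iotaL m '' XA ∪ iotaR m '' XB)) = ⊤ := by
      rw [← Submodule.map_span, h]
      rw [Submodule.map_top, LinearMap.range_eq_top]
      exact fun g => ⟨iotaL m g, projL_iotaL m g⟩
    have hR : Submodule.span (ZMod 2) ((projR m) '' (iotaL m '' XA ∪ iotaR m '' XB)) = ⊤ := by
      rw [← Submodule.map_span, h]
      rw [Submodule.map_top, LinearMap.range_eq_top]
      exact fun g => ⟨iotaR m g, projR_iotaR m g⟩
    constructor
    · rw [eq_top_iff, ← hL]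
      apply Submodule.span_le.mpr
      rintro x ⟨y, hy | hy, rfl⟩
      · obtain ⟨a, ha, rfl⟩ := hy
        rw [projL_iotaL]
        exact Submodule.subset_span ha
      · obtain ⟨b, hb, rfl⟩ := hy
        rw [projL_iotaR]
        exact Submodule.zero_mem _
    · rw [eq_top_iff, ← hR]
      apply Submodule.span_le.mpr
      rintro x ⟨y, hy | hy, rfl⟩
      · obtain ⟨a, ha, rfl⟩ := hy
        rw [projR_iotaL]
        exact Submodule.zero_mem _
      · obtain ⟨b, hb, rfl⟩ := hy
        rw [projR_iotaR]
        exact Submodule.subset_span hb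
  · rintro ⟨hA, hB⟩
    rw [eq_top_iff]
    intro x _
    rw [← iota_decomp m x]
    apply Submodule.add_mem
    · have h1 : projL m x ∈ Submodule.span (ZMod 2) XA := by rw [hA]; trivial
      have h2 : iotaL m (projL m x) ∈ Submodule.span (ZMod 2) (iotaL m '' XA) := by
        rw [← Submodule.map_span]; exact Submodule.mem_map_of_mem h1
      exact Submodule.span_mono Set.subset_union_left h2
    · have h1 : projR m x ∈ Submodule.span (ZMod 2) XB := by rw [hB]; trivial
      have h2 : iotaR m (projR m x) ∈ Submodule.span (ZMod 2) (iotaR m '' XB) := by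
        rw [← Submodule.map_span]; exact Submodule.mem_map_of_mem h1
      exact Submodule.span_mono Set.subset_union_right h2


lemma leaf_embL (m j : ℕ) (hj : j < 2^m) : 2^(m+1) + j = embL (2^m + j) := by
  unfold embL; rw [log_pow_add hj]; have := pow_succ 2 m; omega

lemma leaf_embR (m j : ℕ) (hj : j < 2^m) : 2^(m+1) + (2^m + j) = embR (2^m + j) := by
  unfold embR; rw [log_pow_add hj]; have h1 := pow_succ 2 m; have h2 := pow_succ 2 (m+1); omega

lemma one_le_pow_add (m j : ℕ) : 1 ≤ 2^m + j := by have : 1 ≤ 2^m := Nat.one_le_two_pow; omega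

lemma vec_embL (m : ℕ) (w : ℕ) (hw : 1 ≤ w) :
    vecOf (m+2) (embL w) = iotaL m (vecOf (m+1) w) := by
  funext j
  simp only [vecOf, iotaL, LinearMap.coe_mk, AddHom.coe_mk, show m+2-1 = m+1 from rfl,
    show m+1-1 = m from rfl]
  by_cases h : (j:ℕ) < 2^m
  · rw [dif_pos h]
    have hiff : (∃ t : ℕ, (2^(m+1) + (j:ℕ)) / 2^t = embL w) ↔
        (∃ t : ℕ, (2^m + ((⟨(j:ℕ), h⟩ : Fin (2^m)):ℕ)) / 2^t = w) := by
      simp only [Fin.val_mk]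
      rw [leaf_embL m j h]
      exact anc_LL (one_le_pow_add m j) hw
    exact if_congr hiff rfl rfl
  · rw [dif_neg h]
    have hj2 : (j:ℕ) < 2^(m+1) := j.2
    have hps := pow_succ 2 m
    have hrepr : 2^(m+1) + (j:ℕ) = embR (2^m + ((j:ℕ) - 2^m)) := by
      have := leaf_embR m ((j:ℕ) - 2^m) (by omega)
      omega
    rw [if_neg]
    rw [hrepr]
    exact anc_RL (one_le_pow_add m _) hw

lemma vec_embR (m : ℕ) (w : ℕ) (hw : 1 ≤ w) :
    vecOf (m+2) (embR w) = iotaR m (vecOf (m+1) w) := by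
  funext j
  simp only [vecOf, iotaR, LinearMap.coe_mk, AddHom.coe_mk, show m+2-1 = m+1 from rfl,
    show m+1-1 = m from rfl]
  by_cases h : (j:ℕ) < 2^m
  · rw [dif_pos h, if_neg]
    rw [leaf_embL m j h]
    exact anc_LR (one_le_pow_add m j) hw
  · rw [dif_neg h]
    have hj2 : (j:ℕ) < 2^(m+1) := j.2
    have hps := pow_succ 2 m
    have hrepr : 2^(m+1) + (j:ℕ) = embR (2^m + ((j:ℕ) - 2^m)) := by
      have := leaf_embR m ((j:ℕ) - 2^m) (by omega)
      omega
    have hiff : (∃ t : ℕ, (2^(m+1) + (j:ℕ)) / 2^t = embR w) ↔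
        (∃ t : ℕ, (2^m + (((j:ℕ) - 2^m : ℕ))) / 2^t = w) := by
      rw [hrepr]
      exact anc_RR (one_le_pow_add m _) hw
    exact if_congr hiff rfl rfl

lemma TDec_union (m : ℕ) (A B : Finset ℕ)
    (hA : ∀ w ∈ A, 1 ≤ w) (hB : ∀ w ∈ B, 1 ≤ w) :
    TDecodable (m+2) (A.image embL ∪ B.image embR) ↔
      TDecodable (m+1) A ∧ TDecodable (m+1) B := by
  unfold TDecodable
  have h1 : vecOf (m+2) '' (embL '' (A : Set ℕ)) = iotaL m '' (vecOf (m+1) '' (A : Set ℕ)) := by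
    rw [← Set.image_comp, ← Set.image_comp]
    exact Set.image_congr (fun w hw => vec_embL m w (hA w hw))
  have h2 : vecOf (m+2) '' (embR '' (B : Set ℕ)) = iotaR m '' (vecOf (m+1) '' (B : Set ℕ)) := by
    rw [← Set.image_comp, ← Set.image_comp]
    exact Set.image_congr (fun w hw => vec_embR m w (hB w hw))
  have himg : vecOf (m+2) '' ((A.image embL ∪ B.image embR : Finset ℕ) : Set ℕ)
      = iotaL m '' (vecOf (m+1) '' (A : Set ℕ)) ∪ iotaR m '' (vecOf (m+1) '' (B : Set ℕ)) := by
    rw [Finset.coe_union, Finset.coe_image, Finset.coe_image, Set.image_union, h1, h2]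
  rw [himg]
  exact span_split m _ _


lemma mem_treeVerts {n v : ℕ} : v ∈ treeVerts n ↔ 1 ≤ v ∧ v < 2^n := by
  simp [treeVerts, Finset.mem_Ico]

lemma TDec_of_subset {n : ℕ} {S T : Finset ℕ} (h : S ⊆ T) (hS : TDecodable n S) :
    TDecodable n T := by
  unfold TDecodable at *
  rw [eq_top_iff, ← hS]
  exact Submodule.span_mono (Set.image_mono (Finset.coe_subset.mpr h))

set_option maxHeartbeats 1000000 in
lemma TDec_card_le (n : ℕ) (S : Finset ℕ) (h : TDecodable n S) : 2^(n-1) ≤ S.card := by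
  have himg : vecOf n '' (S : Set ℕ) = ((S.image (vecOf n) : Finset _) : Set _) := by
    simp [Finset.coe_image]
  unfold TDecodable at h
  rw [himg] at h
  have hrank : Set.finrank (ZMod 2) ((S.image (vecOf n) : Finset (Fin (2^(n-1)) → ZMod 2)) :
      Set (Fin (2^(n-1)) → ZMod 2)) ≤ (S.image (vecOf n)).card := finrank_span_finset_le_card _
  have h2 : Set.finrank (ZMod 2) ((S.image (vecOf n) : Finset (Fin (2^(n-1)) → ZMod 2)) :
      Set (Fin (2^(n-1)) → ZMod 2)) = 2^(n-1) := by
    unfold Set.finrank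
    rw [h, finrank_top, Module.finrank_fin_fun]
  calc 2^(n-1) = _ := h2.symm
    _ ≤ (S.image (vecOf n)).card := hrank
    _ ≤ S.card := Finset.card_image_le

lemma Dnum_eq_zero (n : ℕ) (z : ℤ) (hz : z < 0) : Dnum n z = 0 := by
  unfold Dnum
  rw [Finset.card_eq_zero, Finset.filter_eq_empty_iff]
  rintro S hS ⟨hcard, hdec⟩
  have h1 := TDec_card_le n S hdec
  have h2 : ((2:ℤ))^(n-1) ≤ (S.card:ℤ) := by exact_mod_cast h1
  linarith

def cnt (n c : ℕ) : ℕ :=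
  ((treeVerts n).powerset.filter (fun S => S.card = c ∧ TDecodable n S)).card

lemma cnt_eq_Dnum (m c : ℕ) : cnt (m+1) c = Dnum (m+1) ((c:ℤ) - 2^m) := by
  unfold cnt Dnum
  congr 1
  apply Finset.filter_congr
  intro S _
  simp only [show m+1-1 = m from rfl]
  constructor
  · rintro ⟨h1, h2⟩
    exact ⟨by rw [h1]; ring, h2⟩
  · rintro ⟨h1, h2⟩
    refine ⟨?_, h2⟩
    have : (S.card : ℤ) = c := by rw [h1]; ring
    exact_mod_cast this

lemma union_repr (m : ℕ) (S : Finset ℕ) (hS : S ⊆ treeVerts (m+2)) (h1 : 1 ∉ S) :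
    S = ((treeVerts (m+1)).filter (fun w => embL w ∈ S)).image embL ∪
        ((treeVerts (m+1)).filter (fun w => embR w ∈ S)).image embR := by
  ext v
  simp only [Finset.mem_union, Finset.mem_image, Finset.mem_filter]
  constructor
  · intro hv
    have hv2 := mem_treeVerts.mp (hS hv)
    have hvne : v ≠ 1 := fun h => h1 (h ▸ hv)
    obtain ⟨w, hw1, hwb, hcase⟩ := exists_emb (show 2 ≤ v by omega)
    have hwlt : w < 2^(m+1) := hwb (m+1) hv2.2
    rcases hcase with h | h
    · exact Or.inl ⟨w, ⟨mem_treeVerts.mpr ⟨hw1, hwlt⟩, h ▸ hv⟩, h⟩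
    · exact Or.inr ⟨w, ⟨mem_treeVerts.mpr ⟨hw1, hwlt⟩, h ▸ hv⟩, h⟩
  · rintro (⟨w, ⟨_, hmem⟩, rfl⟩ | ⟨w, ⟨_, hmem⟩, rfl⟩) <;> exact hmem

lemma card_union_emb (m : ℕ) (A B : Finset ℕ) (hA : ∀ w ∈ A, 1 ≤ w) (hB : ∀ w ∈ B, 1 ≤ w) :
    (A.image embL ∪ B.image embR).card = A.card + B.card := by
  have hdisj : Disjoint (A.image embL) (B.image embR) := by
    rw [Finset.disjoint_left]
    rintro v hv hv'
    obtain ⟨w, hw, rfl⟩ := Finset.mem_image.mp hv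
    obtain ⟨u, hu, he⟩ := Finset.mem_image.mp hv'
    exact embL_ne_embR w u (hA w hw) (hB u hu) he.symm
  rw [Finset.card_union_of_disjoint hdisj,
    Finset.card_image_of_injOn (fun w hw u hu h => embL_inj (hA w hw) (hA u hu) h),
    Finset.card_image_of_injOn (fun w hw u hu h => embR_inj (hB w hw) (hB u hu) h)]

lemma count_split (m M : ℕ) :
    (((treeVerts (m+2)).powerset).filter
      (fun S => 1 ∉ S ∧ S.card = M ∧ TDecodable (m+2) S)).card
    = ∑ a ∈ Finset.range (M+1), cnt (m+1) a * cnt (m+1) (M - a) := by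
  classical
  set P := (treeVerts (m+1)).powerset with hP
  set Q := (P ×ˢ P).filter (fun p : Finset ℕ × Finset ℕ =>
      p.1.card + p.2.card = M ∧ TDecodable (m+1) p.1 ∧ TDecodable (m+1) p.2) with hQdef
  have hQmem : ∀ p : Finset ℕ × Finset ℕ, p ∈ Q ↔
      p.1 ⊆ treeVerts (m+1) ∧ p.2 ⊆ treeVerts (m+1) ∧
      p.1.card + p.2.card = M ∧ TDecodable (m+1) p.1 ∧ TDecodable (m+1) p.2 := by
    intro p
    simp only [hQdef, Finset.mem_filter, Finset.mem_product, hP, Finset.mem_powerset]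
    tauto
  have hone : ∀ (C : Finset ℕ), C ⊆ treeVerts (m+1) → ∀ w ∈ C, 1 ≤ w :=
    fun C hC w hw => (mem_treeVerts.mp (hC hw)).1
  have hcard : (((treeVerts (m+2)).powerset).filter
      (fun S => 1 ∉ S ∧ S.card = M ∧ TDecodable (m+2) S)).card = Q.card := by
    apply Finset.card_nbij'
      (i := fun S => ((treeVerts (m+1)).filter (fun w => embL w ∈ S),
                      (treeVerts (m+1)).filter (fun w => embR w ∈ S)))
      (j := fun p => p.1.image embL ∪ p.2.image embR)
    · intro S hS
      rw [Finset.mem_coe, Finset.mem_filter, Finset.mem_powerset] at hS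
      obtain ⟨hsub, h1, hM, hdec⟩ := hS
      rw [Finset.mem_coe, hQmem]
      refine ⟨Finset.filter_subset _ _, Finset.filter_subset _ _, ?_, ?_⟩
      · rw [← card_union_emb m _ _ (hone _ (Finset.filter_subset _ _))
          (hone _ (Finset.filter_subset _ _)), ← union_repr m S hsub h1, hM]
      · rw [← TDec_union m _ _ (hone _ (Finset.filter_subset _ _))
          (hone _ (Finset.filter_subset _ _)), ← union_repr m S hsub h1]
        exact hdec
    · intro p hp
      rw [Finset.mem_coe, hQmem] at hp
      obtain ⟨hp1, hp2, hM, hd1, hd2⟩ := hp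
      rw [Finset.mem_coe, Finset.mem_filter, Finset.mem_powerset]
      have hmem : ∀ v ∈ p.1.image embL ∪ p.2.image embR, 2 ≤ v ∧ v < 2^(m+2) := by
        intro v hv
        rcases Finset.mem_union.mp hv with hv | hv
        · obtain ⟨w, hw, rfl⟩ := Finset.mem_image.mp hv
          have hw2 := mem_treeVerts.mp (hp1 hw)
          exact ⟨two_le_embL w hw2.1, embL_lt_pow hw2.1 hw2.2⟩
        · obtain ⟨w, hw, rfl⟩ := Finset.mem_image.mp hv
          have hw2 := mem_treeVerts.mp (hp2 hw)
          exact ⟨two_le_embR w hw2.1, embR_lt_pow hw2.1 hw2.2⟩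
      refine ⟨fun v hv => mem_treeVerts.mpr ⟨by have := hmem v hv; omega,
        (hmem v hv).2⟩, fun hc => by have := hmem 1 hc; omega, ?_, ?_⟩
      · rw [card_union_emb m _ _ (hone _ hp1) (hone _ hp2)]; exact hM
      · exact (TDec_union m _ _ (hone _ hp1) (hone _ hp2)).mpr ⟨hd1, hd2⟩
    · intro S hS
      rw [Finset.mem_coe, Finset.mem_filter, Finset.mem_powerset] at hS
      exact (union_repr m S hS.1 hS.2.1).symm
    · intro p hp
      rw [Finset.mem_coe, hQmem] at hp
      obtain ⟨hp1, hp2, -, -, -⟩ := hp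
      have hL : ∀ w ∈ p.1, 1 ≤ w := hone _ hp1
      have hR : ∀ w ∈ p.2, 1 ≤ w := hone _ hp2
      have e1 : (treeVerts (m+1)).filter
          (fun w => embL w ∈ p.1.image embL ∪ p.2.image embR) = p.1 := by
        ext w
        simp only [Finset.mem_filter, Finset.mem_union, Finset.mem_image]
        constructor
        · rintro ⟨hwT, ⟨u, hu, he⟩ | ⟨u, hu, he⟩⟩
          · rwa [← embL_inj (hL u hu) (mem_treeVerts.mp hwT).1 he]
          · exact absurd he (embL_ne_embR w u (mem_treeVerts.mp hwT).1 (hR u hu)).symm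
        · intro hw
          exact ⟨hp1 hw, Or.inl ⟨w, hw, rfl⟩⟩
      have e2 : (treeVerts (m+1)).filter
          (fun w => embR w ∈ p.1.image embL ∪ p.2.image embR) = p.2 := by
        ext w
        simp only [Finset.mem_filter, Finset.mem_union, Finset.mem_image]
        constructor
        · rintro ⟨hwT, ⟨u, hu, he⟩ | ⟨u, hu, he⟩⟩
          · exact absurd he (embL_ne_embR u w (hL u hu) (mem_treeVerts.mp hwT).1)
          · rwa [← embR_inj (hR u hu) (mem_treeVerts.mp hwT).1 he]
        · intro hw
          exact ⟨hp2 hw, Or.inr ⟨w, hw, rfl⟩⟩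
      exact Prod.ext e1 e2
  rw [hcard]
  rw [Finset.card_eq_sum_card_fiberwise (f := fun p : Finset ℕ × Finset ℕ => p.1.card)
    (t := Finset.range (M+1)) (fun p hp => by
      rw [Finset.mem_coe, hQmem] at hp
      simp only [Finset.mem_coe, Finset.mem_range]
      omega)]
  apply Finset.sum_congr rfl
  intro a ha
  have haM : a ≤ M := by have := Finset.mem_range.mp ha; omega
  have hfib : Q.filter (fun p => p.1.card = a)
      = (P.filter (fun S => S.card = a ∧ TDecodable (m+1) S)) ×ˢ
        (P.filter (fun S => S.card = M - a ∧ TDecodable (m+1) S)) := by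
    ext p
    rw [Finset.mem_filter, hQmem, Finset.mem_product, Finset.mem_filter, Finset.mem_filter,
      hP, Finset.mem_powerset, Finset.mem_powerset]
    constructor
    · rintro ⟨⟨h1, h2, h3, h4, h5⟩, h6⟩
      exact ⟨⟨h1, h6, h4⟩, ⟨h2, by omega, h5⟩⟩
    · rintro ⟨⟨h1, h6, h4⟩, ⟨h2, h7, h5⟩⟩
      exact ⟨⟨h1, h2, by omega, h4, h5⟩, h6⟩
  rw [hfib, Finset.card_product]
  rfl

lemma card_root (m N : ℕ) (hN : 1 ≤ N) :
    ((treeVerts (m+2)).powerset.filter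
      (fun S => (S.card = N ∧ TDecodable (m+2) (S.erase 1)) ∧ 1 ∈ S)).card
    = ((treeVerts (m+2)).powerset.filter
      (fun S => 1 ∉ S ∧ S.card = N - 1 ∧ TDecodable (m+2) S)).card := by
  apply Finset.card_nbij' (i := fun S => S.erase 1) (j := fun S => insert 1 S)
  · intro S hS
    simp only [Finset.mem_coe] at hS ⊢
    rw [Finset.mem_filter, Finset.mem_powerset] at *
    obtain ⟨hsub, ⟨hc, hdec⟩, h1⟩ := hS
    exact ⟨(Finset.erase_subset 1 S).trans hsub, Finset.notMem_erase 1 S,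
      by rw [Finset.card_erase_of_mem h1, hc], hdec⟩
  · intro S hS
    simp only [Finset.mem_coe] at hS ⊢
    rw [Finset.mem_filter, Finset.mem_powerset] at *
    obtain ⟨hsub, h1, hc, hdec⟩ := hS
    have hroot : (1:ℕ) ∈ treeVerts (m+2) := mem_treeVerts.mpr ⟨le_refl 1, Nat.one_lt_two_pow (by omega)⟩
    refine ⟨Finset.insert_subset hroot hsub, ⟨?_, ?_⟩, Finset.mem_insert_self 1 S⟩
    · rw [Finset.card_insert_of_notMem h1, hc]; omega
    · rwa [Finset.erase_insert h1]
  · intro S hS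
    rw [Finset.mem_coe, Finset.mem_filter] at hS
    exact Finset.insert_erase hS.2.2
  · intro S hS
    rw [Finset.mem_coe, Finset.mem_filter] at hS
    exact Finset.erase_insert hS.2.1

lemma key_sum (m M J : ℕ) (hJ : (M:ℤ) ≤ 2^(m+1) + J) :
    ∑ a ∈ Finset.range (M+1), cnt (m+1) a * cnt (m+1) (M - a)
    = ∑ l ∈ Finset.range (J+1), Dnum (m+1) l * Dnum (m+1) ((M:ℤ) - 2^(m+1) - l) := by
  classical
  have hz : ∀ c : ℕ, c < 2^m → cnt (m+1) c = 0 := by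
    intro c hc
    rw [cnt_eq_Dnum]
    apply Dnum_eq_zero
    have : (c:ℤ) < 2^m := by exact_mod_cast hc
    linarith
  set f : ℕ → ℕ := fun a => cnt (m+1) a * cnt (m+1) (M - a) with hf
  set I : Finset ℕ := (Finset.range (J+1)).image (fun l => 2^m + l) with hI
  have hps : (2:ℕ)^(m+1) = 2^m * 2 := pow_succ 2 m
  have hzps : (2:ℤ)^(m+1) = 2^m * 2 := pow_succ 2 m
  have hpow : ((2:ℕ)^m : ℤ) = (2:ℤ)^m := by push_cast; ring
  have hpow1 : ((2:ℕ)^(m+1) : ℤ) = (2:ℤ)^(m+1) := by push_cast; ring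
  have step1 : ∑ a ∈ Finset.range (M+1), f a = ∑ a ∈ Finset.range (M+1) ∪ I, f a := by
    apply Finset.sum_subset Finset.subset_union_left
    intro a _ ha
    rw [Finset.mem_range] at ha
    have hMa : M - a = 0 := by omega
    have h2 : (0:ℕ) < 2^m := Nat.two_pow_pos m
    rw [hf]; simp only [hMa]
    rw [hz 0 h2, mul_zero]
  have step2 : ∑ a ∈ Finset.range (M+1) ∪ I, f a = ∑ a ∈ I, f a := by
    symm
    apply Finset.sum_subset Finset.subset_union_right
    intro a _ ha
    rw [hI, Finset.mem_image] at ha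
    push_neg at ha
    have hcase : a < 2^m ∨ 2^m + J < a := by
      by_contra hcon
      push_neg at hcon
      exact ha (a - 2^m) (Finset.mem_range.mpr (by omega)) (by omega)
    rcases hcase with h | h
    · rw [hf]; simp only; rw [hz a h, zero_mul]
    · have hlt : M < 2^m + a := by
        have h1 : (J:ℤ) < (a:ℤ) - 2^m := by
          have : ((2^m + J : ℕ) : ℤ) < a := by exact_mod_cast h
          push_cast at this ⊢
          linarith
        have : (M:ℤ) < 2^m + a := by rw [hzps] at hJ; linarith
        exact_mod_cast this
      rw [hf]; simp only
      have hpos : 1 ≤ 2^m := Nat.one_le_two_pow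
      rw [hz (M - a) (by omega), mul_zero]
  have step3 : ∑ a ∈ I, f a = ∑ l ∈ Finset.range (J+1), f (2^m + l) := by
    rw [hI]
    apply Finset.sum_image
    intro x _ y _ h
    have h' : 2^m + x = 2^m + y := h
    omega
  rw [step1, step2, step3]
  apply Finset.sum_congr rfl
  intro l _
  rw [hf]; simp only
  congr 1
  · rw [cnt_eq_Dnum]
    congr 1
    push_cast
    ring
  · rw [cnt_eq_Dnum]
    by_cases h : 2^m + l ≤ M
    · congr 1
      rw [Nat.cast_sub h]
      push_cast
      rw [hzps]
      ring
    · rw [Nat.sub_eq_zero_of_le (by omega)]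
      have hp0 : (0:ℤ) < 2^m := by positivity
      have e1 : Dnum (m+1) (((0:ℕ):ℤ) - 2^m) = 0 := Dnum_eq_zero _ _ (by push_cast; linarith)
      have e2 : Dnum (m+1) ((M:ℤ) - 2^(m+1) - l) = 0 := by
        apply Dnum_eq_zero
        have hMl : (M:ℤ) < 2^m + l := by
          have : (M:ℕ) < 2^m + l := by omega
          exact_mod_cast this
        rw [hzps]
        linarith
      rw [e1, e2]

/-- Recursion for `r_{d,j}`: for `d ≥ 2`, `j ≥ 0`,
`r_{d,j} = Σ_{l=0}^{j} D_{d-1,l}·D_{d-1,j-l} + Σ_{l=0}^{j} D_{d-1,l}·D_{d-1,j-l-1}`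
(with the convention `D_{d-1,m} = 0` for `m < 0` or `m > 2^{d-2}-1`, which holds
automatically for `Dnum`). -/
theorem rnum_recursion (d : ℕ) (hd : 2 ≤ d) (j : ℕ) :
    rnum d j =
      (∑ l ∈ Finset.range (j + 1), Dnum (d - 1) l * Dnum (d - 1) ((j : ℤ) - l)) +
      ∑ l ∈ Finset.range (j + 1), Dnum (d - 1) l * Dnum (d - 1) ((j : ℤ) - l - 1) := by
  classical
  obtain ⟨m, rfl⟩ : ∃ m, d = m + 2 := ⟨d - 2, by omega⟩
  unfold rnum
  simp only [show m + 2 - 1 = m + 1 from rfl]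
  set N := 2^(m+1) + j with hN
  have hN1 : 1 ≤ N := by have : 1 ≤ 2^(m+1) := Nat.one_le_two_pow; omega
  have hR : ((treeVerts (m+2)).powerset.filter
      (fun S => (S.card : ℤ) = 2 ^ (m+1) + (j:ℤ) ∧ TDecodable (m+2) S ∧
        ¬ (1 ∈ S ∧ ¬ TDecodable (m+2) (S.erase 1))))
      = (treeVerts (m+2)).powerset.filter
        (fun S => S.card = N ∧ TDecodable (m+2) (S.erase 1)) := by
    apply Finset.filter_congr
    intro S _
    have hcast : ((S.card : ℤ) = 2 ^ (m+1) + (j:ℤ)) ↔ S.card = N := by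
      rw [hN]
      constructor
      · intro h; exact_mod_cast h
      · intro h; rw [h]; push_cast; ring
    have hE : (TDecodable (m+2) S ∧ ¬(1 ∈ S ∧ ¬TDecodable (m+2) (S.erase 1))) ↔
        TDecodable (m+2) (S.erase 1) := by
      by_cases h1 : 1 ∈ S
      · constructor
        · rintro ⟨_, hn⟩; by_contra hEc; exact hn ⟨h1, hEc⟩
        · intro hEe; exact ⟨TDec_of_subset (Finset.erase_subset 1 S) hEe, fun h => h.2 hEe⟩
      · rw [Finset.erase_eq_of_notMem h1]
        constructor
        · rintro ⟨h, _⟩; exact h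
        · intro h; exact ⟨h, fun hc => h1 hc.1⟩
    exact and_congr hcast hE
  rw [hR]
  rw [← Finset.card_filter_add_card_filter_not (p := fun S => (1:ℕ) ∈ S)]
  have hpart1 : (((treeVerts (m+2)).powerset.filter
        (fun S => S.card = N ∧ TDecodable (m+2) (S.erase 1))).filter
        (fun S => (1:ℕ) ∈ S)).card
      = ∑ l ∈ Finset.range (j + 1),
          Dnum (m+1) l * Dnum (m+1) ((j : ℤ) - l - 1) := by
    rw [Finset.filter_filter, card_root m N hN1, count_split m (N-1),
      key_sum m (N-1) j (by rw [Nat.cast_sub hN1, hN]; push_cast; linarith)]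
    apply Finset.sum_congr rfl
    intro l _
    congr 1
    rw [Nat.cast_sub hN1, hN]
    push_cast
    ring
  have hpart2 : (((treeVerts (m+2)).powerset.filter
        (fun S => S.card = N ∧ TDecodable (m+2) (S.erase 1))).filter
        (fun S => ¬ (1:ℕ) ∈ S)).card
      = ∑ l ∈ Finset.range (j + 1),
          Dnum (m+1) l * Dnum (m+1) ((j : ℤ) - l) := by
    rw [Finset.filter_filter]
    have heq : (treeVerts (m+2)).powerset.filter
        (fun S => (S.card = N ∧ TDecodable (m+2) (S.erase 1)) ∧ ¬ (1:ℕ) ∈ S)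
        = (treeVerts (m+2)).powerset.filter
        (fun S => 1 ∉ S ∧ S.card = N ∧ TDecodable (m+2) S) := by
      apply Finset.filter_congr
      intro S _
      constructor
      · rintro ⟨⟨hc, hd2⟩, h1⟩
        rw [Finset.erase_eq_of_notMem h1] at hd2
        exact ⟨h1, hc, hd2⟩
      · rintro ⟨h1, hc, hd2⟩
        rw [Finset.erase_eq_of_notMem h1]
        exact ⟨⟨hc, hd2⟩, h1⟩
    rw [heq, count_split m N, key_sum m N j (by rw [hN]; push_cast; linarith)]
    apply Finset.sum_congr rfl
    intro l _
    congr 1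
    rw [hN]
    push_cast
    ring
  rw [hpart1, hpart2]
  ring

end Treeplication
end
end

section
/- Let a, b be real numbers with a ≥ 0 and b > 0, and let p, p' be real numbers with 0 ≤ p' < p ≤ 1. Then (a + b·p')·(a + b·p' + 2·b·p − 2·b·p'·p) < (a + b·p)·(a + b·p + 2·b·p' − 2·b·p'·p). -/
/-- The key algebraic inequality in the proof that optimal Treeplication
selection distributions have layer probabilities non-increasing in the layer index: for
real `a ≥ 0`, `b > 0` and `0 ≤ p' < p ≤ 1`,
`(a + b·p')·(a + b·p' + 2·b·p − 2·b·p'·p) < (a + b·p)·(a + b·p + 2·b·p' − 2·b·p'·p)`. -/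
theorem exchange_inequality (a b p p' : ℝ) (ha : 0 ≤ a) (hb : 0 < b)
    (hp' : 0 ≤ p') (hlt : p' < p) (hp : p ≤ 1) :
    (a + b * p') * (a + b * p' + 2 * b * p - 2 * b * p' * p) <
      (a + b * p) * (a + b * p + 2 * b * p' - 2 * b * p' * p) := by
  have h1 : 0 < p - p' := sub_pos.mpr hlt
  have h2 : 0 < p + p' - 2 * p' * p := by nlinarith
  nlinarith [mul_pos (mul_pos (mul_pos hb hb) h1) h2]
end

section
/- Let S be a decodable Treeplication subset of T_d. Then: (1) there is no missing-vertex path from a leaf up to the root (i.e., no leaf all of whose ancestors, including itself and the root, are missing); and (2) there is no vertex x of T_d (present or missing) such that both children of x have missing-vertex paths going down from them to two leaves. -/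
open scoped Classical
noncomputable section

namespace Treeplication

/-- Given a Treeplication subset `S` (present vertices), `missingPath S a y` says that the
downward path in the tree from `a` to `y` (the vertices `y/2^s`, `s = 0,…,t`, where
`y/2^t = a`) is a missing-vertex path: all its vertices are missing from `S`. -/
def missingPath (S : Finset ℕ) (a y : ℕ) : Prop :=
  ∃ t : ℕ, y / 2 ^ t = a ∧ ∀ s ≤ t, y / 2 ^ s ∉ S

lemma div_pow_split {y : ℕ} {a b : ℕ} (hab : a ≤ b) :
    y / 2 ^ b = (y / 2 ^ a) / 2 ^ (b - a) := by
  rw [Nat.div_div_eq_div_mul, ← pow_add]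
  congr 2
  omega

lemma strict_anc_of_missing {S : Finset ℕ} {a y v s t : ℕ}
    (hvS : v ∈ S) (ha : y / 2 ^ t = a) (hm : ∀ s' ≤ t, y / 2 ^ s' ∉ S)
    (hs : y / 2 ^ s = v) : ∃ r, 1 ≤ r ∧ a / 2 ^ r = v := by
  by_cases hst : s ≤ t
  · exact absurd (hs ▸ hvS) (hm s hst)
  · refine ⟨s - t, by omega, ?_⟩
    rw [← ha, ← div_pow_split (by omega), hs]

lemma not_common_desc {x y t₁ t₂ : ℕ} (hx : 1 ≤ x)
    (h₁ : y / 2 ^ t₁ = 2 * x) (h₂ : y / 2 ^ t₂ = 2 * x + 1) : False := by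
  have h2le : ∀ k : ℕ, 1 ≤ k → (2:ℕ) ≤ 2 ^ k := fun k hk =>
    le_trans (by norm_num) (Nat.pow_le_pow_right (by norm_num) hk)
  rcases le_or_gt t₁ t₂ with h | h
  · have key := div_pow_split (y := y) h
    rw [h₁, h₂] at key
    rcases Nat.eq_or_lt_of_le h with rfl | hlt
    · rw [Nat.sub_self, pow_zero, Nat.div_one] at key; omega
    · have hle : (2 * x) / 2 ^ (t₂ - t₁) ≤ (2 * x) / 2 :=
        Nat.div_le_div_left (h2le _ (by omega)) (by norm_num)
      have h2 : 2 * x / 2 = x := by omega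
      omega
  · have key := div_pow_split (y := y) (le_of_lt h)
    rw [h₁, h₂] at key
    have hle : (2 * x + 1) / 2 ^ (t₁ - t₂) ≤ (2 * x + 1) / 2 :=
      Nat.div_le_div_left (h2le _ (by omega)) (by norm_num)
    have h2 : (2 * x + 1) / 2 = x := by omega
    omega

lemma eval_zero {n : ℕ} {T : Set (Fin n → ZMod 2)}
    (h : Submodule.span (ZMod 2) T = ⊤)
    (φ : (Fin n → ZMod 2) →ₗ[ZMod 2] ZMod 2) (h0 : ∀ g ∈ T, φ g = 0)
    (f : Fin n → ZMod 2) : φ f = 0 := by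
  have hle : Submodule.span (ZMod 2) T ≤ LinearMap.ker φ :=
    Submodule.span_le.mpr fun g hg => h0 g hg
  rw [h] at hle
  exact hle (Submodule.mem_top (x := f))

/-- If `S` is a decodable Treeplication subset of `T_d`, then:
(1) there is no missing-vertex path from a leaf up to the root; and (2) no vertex `x` of
`T_d` (present or missing) has missing-vertex paths from its two children `2x` and `2x+1`
down to two leaves. -/
theorem no_two_missing_paths (d : ℕ) (hd : 1 ≤ d) (S : Finset ℕ)
    (hS : S ⊆ treeVerts d) (hdec : TDecodable d S) :
    (¬ ∃ y, IsLeaf d y ∧ missingPath S 1 y) ∧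
    (¬ ∃ x, 1 ≤ x ∧ 2 * x + 1 < 2 ^ d ∧
      (∃ y₁, IsLeaf d y₁ ∧ missingPath S (2 * x) y₁) ∧
      (∃ y₂, IsLeaf d y₂ ∧ missingPath S (2 * x + 1) y₂)) := by
  have hpow : 2 ^ d = 2 ^ (d - 1) * 2 := by
    rw [← pow_succ]; congr 1; omega
  constructor
  · rintro ⟨y, hy, t, hyt, hmiss⟩
    have hj : y - 2 ^ (d - 1) < 2 ^ (d - 1) := by
      have h1 := hy.1; have h2 := hy.2; omega
    set j : Fin (2 ^ (d - 1)) := ⟨y - 2 ^ (d - 1), hj⟩ with hjdef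
    have hyj : 2 ^ (d - 1) + (j : ℕ) = y := by
      have := hy.1; simp [hjdef]; omega
    have hker : ∀ g ∈ vecOf d '' (S : Set ℕ), (LinearMap.proj j :
        (Fin (2 ^ (d-1)) → ZMod 2) →ₗ[ZMod 2] ZMod 2) g = 0 := by
      rintro g ⟨v, hvS, rfl⟩
      simp only [LinearMap.proj_apply, vecOf]
      rw [if_neg]
      rintro ⟨s, hs⟩
      rw [hyj] at hs
      obtain ⟨r, hr1, hrv⟩ := strict_anc_of_missing hvS hyt hmiss hs
      have hv1 : 1 ≤ v := (Finset.mem_Ico.mp (hS hvS)).1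
      have h10 : (1 : ℕ) / 2 ^ r = 0 := Nat.div_eq_of_lt (by
        calc (1:ℕ) < 2 ^ 1 := by norm_num
        _ ≤ 2 ^ r := Nat.pow_le_pow_right (by norm_num) hr1)
      omega
    have hcon := eval_zero hdec _ hker (Pi.single j 1)
    rw [LinearMap.proj_apply, Pi.single_eq_same] at hcon
    exact one_ne_zero hcon
  · rintro ⟨x, hx1, hx2, ⟨y₁, hy₁, t₁, ht₁, hm₁⟩, ⟨y₂, hy₂, t₂, ht₂, hm₂⟩⟩
    have hj₁ : y₁ - 2 ^ (d - 1) < 2 ^ (d - 1) := by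
      have := hy₁.1; have := hy₁.2; omega
    have hj₂ : y₂ - 2 ^ (d - 1) < 2 ^ (d - 1) := by
      have := hy₂.1; have := hy₂.2; omega
    set j₁ : Fin (2 ^ (d - 1)) := ⟨y₁ - 2 ^ (d - 1), hj₁⟩ with hj1def
    set j₂ : Fin (2 ^ (d - 1)) := ⟨y₂ - 2 ^ (d - 1), hj₂⟩ with hj2def
    have hyj₁ : 2 ^ (d - 1) + (j₁ : ℕ) = y₁ := by
      have := hy₁.1; simp [hj1def]; omega
    have hyj₂ : 2 ^ (d - 1) + (j₂ : ℕ) = y₂ := by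
      have := hy₂.1; simp [hj2def]; omega
    have hne : y₁ ≠ y₂ := by
      rintro rfl
      exact not_common_desc hx1 ht₁ ht₂
    have hjne : j₂ ≠ j₁ := by
      intro h
      apply hne
      have hval := congrArg (Fin.val) h
      simp only [hj1def, hj2def] at hval
      have := hy₁.1; have := hy₂.1; omega
    have hx₁ : y₁ / 2 ^ (t₁ + 1) = x := by
      rw [div_pow_split (a := t₁) (Nat.le_succ t₁), ht₁,
        show t₁ + 1 - t₁ = 1 by omega, pow_one]
      omega
    have hx₂ : y₂ / 2 ^ (t₂ + 1) = x := by
      rw [div_pow_split (a := t₂) (Nat.le_succ t₂), ht₂,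
        show t₂ + 1 - t₂ = 1 by omega, pow_one]
      omega
    have key : ∀ v ∈ S, (∃ s, y₁ / 2 ^ s = v) ↔ (∃ s, y₂ / 2 ^ s = v) := by
      intro v hvS
      constructor
      · rintro ⟨s, hs⟩
        obtain ⟨r, hr1, hrv⟩ := strict_anc_of_missing hvS ht₁ hm₁ hs
        have hp : (2:ℕ) ^ r = 2 * 2 ^ (r - 1) := by
          rw [← pow_succ']; congr 1; omega
        have hvx : x / 2 ^ (r - 1) = v := by
          rw [← hrv, hp, ← Nat.div_div_eq_div_mul,
            Nat.mul_div_cancel_left x (by norm_num : 0 < 2)]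
        refine ⟨t₂ + 1 + (r - 1), ?_⟩
        rw [div_pow_split (a := t₂ + 1) (by omega), hx₂,
          show t₂ + 1 + (r - 1) - (t₂ + 1) = r - 1 by omega]
        exact hvx
      · rintro ⟨s, hs⟩
        obtain ⟨r, hr1, hrv⟩ := strict_anc_of_missing hvS ht₂ hm₂ hs
        have hp : (2:ℕ) ^ r = 2 * 2 ^ (r - 1) := by
          rw [← pow_succ']; congr 1; omega
        have h21 : (2 * x + 1) / 2 = x := by omega
        have hvx : x / 2 ^ (r - 1) = v := by
          rw [← hrv, hp, ← Nat.div_div_eq_div_mul, h21]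
        refine ⟨t₁ + 1 + (r - 1), ?_⟩
        rw [div_pow_split (a := t₁ + 1) (by omega), hx₁,
          show t₁ + 1 + (r - 1) - (t₁ + 1) = r - 1 by omega]
        exact hvx
    have hval : ∀ v ∈ S, vecOf d v j₁ = vecOf d v j₂ := by
      intro v hvS
      simp only [vecOf, hyj₁, hyj₂]
      by_cases h : ∃ s, y₁ / 2 ^ s = v
      · rw [if_pos h, if_pos ((key v hvS).mp h)]
      · rw [if_neg h, if_neg (fun h' => h ((key v hvS).mpr h'))]
    set φ : (Fin (2 ^ (d-1)) → ZMod 2) →ₗ[ZMod 2] ZMod 2 :=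
      LinearMap.proj (R := ZMod 2) (φ := fun _ => ZMod 2) j₁
        + LinearMap.proj (R := ZMod 2) (φ := fun _ => ZMod 2) j₂ with hφ
    have hker : ∀ g ∈ vecOf d '' (S : Set ℕ), φ g = 0 := by
      rintro g ⟨v, hvS, rfl⟩
      rw [hφ, LinearMap.add_apply, LinearMap.proj_apply, LinearMap.proj_apply,
        hval v hvS]
      exact CharTwo.add_self_eq_zero _
    have hcon := eval_zero hdec φ hker (Pi.single j₁ 1)
    rw [hφ, LinearMap.add_apply, LinearMap.proj_apply, LinearMap.proj_apply,
      Pi.single_eq_same, Pi.single_eq_of_ne hjne] at hcon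
    exact absurd hcon (by decide)

end Treeplication
end
end

section
/- Let S be a decodable Treeplication subset of T_d and let k = 2^{d-1}. Then there exists a decodable subset S' ⊆ S with exactly k vertices whose total communication cost is at most k − 1; i.e., for S', the sum over all present vertices x that recover some missing leaf of the number sum_x of present vertices z ≠ x whose lowest present strict ancestor is x is at most k − 1. -/
open scoped Classical
noncomputable section

namespace Treeplication

/-- A present vertex `x` recovers the missing leaf `y` if there is a missing-vertex path
from a child of `x` down to `y`. -/
def Recovers (S : Finset ℕ) (x y : ℕ) : Prop :=
  x ∈ S ∧ ∃ c, (c = 2 * x ∨ c = 2 * x + 1) ∧ missingPath S c y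

/-- `x` is the lowest present strict ancestor of `y`: `x` is present, `x` is a strict
ancestor of `y`, and every strict ancestor of `y` strictly below `x` is missing. -/
def LowestPresentStrictAncestor (S : Finset ℕ) (y x : ℕ) : Prop :=
  x ∈ S ∧ ∃ t, 1 ≤ t ∧ y / 2 ^ t = x ∧ ∀ s, 1 ≤ s → s < t → y / 2 ^ s ∉ S

/-- The communication count `sum_x` of a present vertex `x`: the number of present
vertices `z ≠ x` whose lowest present strict ancestor is `x`. -/
def sumX (S : Finset ℕ) (x : ℕ) : ℕ :=
  (S.filter (fun z => z ≠ x ∧ LowestPresentStrictAncestor S z x)).card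

/-- The total communication cost of the subset `S` of `T_d`: the sum of `sum_x` over all
present vertices `x` that recover some missing leaf. -/
def totalCost (d : ℕ) (S : Finset ℕ) : ℕ :=
  ∑ x ∈ S.filter (fun x => ∃ y, IsLeaf d y ∧ y ∉ S ∧ Recovers S x y), sumX S x

lemma lpsa_unique {S : Finset ℕ} {z x x' : ℕ}
    (h : LowestPresentStrictAncestor S z x) (h' : LowestPresentStrictAncestor S z x') :
    x = x' := by
  obtain ⟨hx, t, ht1, htx, hmiss⟩ := h
  obtain ⟨hx', t', ht1', htx', hmiss'⟩ := h'
  rcases lt_trichotomy t t' with hlt | heq | hgt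
  · exact absurd (htx ▸ hx) (hmiss' t ht1 hlt)
  · rw [← htx, ← htx', heq]
  · exact absurd (htx' ▸ hx') (hmiss t' ht1' hgt)

lemma cost_bound (d : ℕ) (S' : Finset ℕ) (h0 : 0 ∉ S') (hne : S'.Nonempty) :
    totalCost d S' ≤ S'.card - 1 := by
  classical
  set z₀ := S'.min' hne with hz₀
  have hz₀mem : z₀ ∈ S' := S'.min'_mem hne
  have hz₀pos : 1 ≤ z₀ := by
    rcases Nat.eq_zero_or_pos z₀ with h | h
    · exact absurd (h ▸ hz₀mem) h0
    · exact h
  set F : ℕ → Finset ℕ :=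
    fun x => S'.filter (fun z => z ≠ x ∧ LowestPresentStrictAncestor S' z x) with hF
  have hdisj : ∀ x ∈ S', ∀ x' ∈ S', x ≠ x' → Disjoint (F x) (F x') := by
    intro x _ x' _ hxx'
    refine Finset.disjoint_left.2 ?_
    intro z hz hz'
    simp only [hF, Finset.mem_filter] at hz hz'
    exact hxx' (lpsa_unique hz.2.2 hz'.2.2)
  have hsub : S'.biUnion F ⊆ S'.erase z₀ := by
    intro z hz
    rw [Finset.mem_biUnion] at hz
    obtain ⟨x, hx, hzx⟩ := hz
    simp only [hF, Finset.mem_filter] at hzx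
    refine Finset.mem_erase.2 ⟨?_, hzx.1⟩
    rintro rfl
    obtain ⟨hxS, t, ht1, htx, -⟩ := hzx.2.2
    have hxlt : x < z₀ := by
      calc x = z₀ / 2 ^ t := htx.symm
        _ ≤ z₀ / 2 ^ 1 := Nat.div_le_div_left (Nat.pow_le_pow_right (by norm_num) ht1)
            (by positivity)
        _ < z₀ := Nat.div_lt_self hz₀pos (by norm_num)
    exact absurd (S'.min'_le x hxS) (not_le.2 hxlt)
  have hcost : totalCost d S' ≤ ∑ x ∈ S', sumX S' x := by
    apply Finset.sum_le_sum_of_subset (Finset.filter_subset _ _)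
  have hsum : ∑ x ∈ S', sumX S' x = (S'.biUnion F).card := by
    rw [Finset.card_biUnion hdisj]
    rfl
  calc totalCost d S' ≤ (S'.biUnion F).card := hcost.trans_eq hsum
    _ ≤ (S'.erase z₀).card := Finset.card_le_card hsub
    _ = S'.card - 1 := Finset.card_erase_of_mem hz₀mem

/-- For any decodable Treeplication subset `S` of `T_d` and
`k = 2^{d-1}`, there exists a decodable subset `S' ⊆ S` with exactly `k` vertices whose
total communication cost is at most `k − 1`. -/
theorem worst_case_communication (d : ℕ) (hd : 1 ≤ d) (S : Finset ℕ)
    (hS : S ⊆ treeVerts d) (hdec : TDecodable d S) :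
    ∃ S' : Finset ℕ, S' ⊆ S ∧ S'.card = 2 ^ (d - 1) ∧ TDecodable d S' ∧
      totalCost d S' ≤ 2 ^ (d - 1) - 1 := by
  classical
  obtain ⟨b, hbs, hspan, hli⟩ :=
    exists_linearIndependent (ZMod 2) (vecOf d '' (S : Set ℕ))
  rw [hdec] at hspan
  have hbfin : b.Finite := Set.toFinite b
  haveI : Fintype b := hbfin.fintype
  -- b is a basis
  let B : Module.Basis b (ZMod 2) (Fin (2 ^ (d - 1)) → ZMod 2) :=
    Module.Basis.mk hli (by rw [Subtype.range_coe, hspan])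
  have hcardb : Fintype.card b = 2 ^ (d - 1) := by
    have h1 := Module.finrank_eq_card_basis B
    have h2 : Module.finrank (ZMod 2) (Fin (2 ^ (d - 1)) → ZMod 2) = 2 ^ (d - 1) := by
      simp [Module.finrank_pi]
    omega
  -- choose preimages
  have hex : ∀ v ∈ b, ∃ a ∈ S, vecOf d a = v := by
    intro v hv
    obtain ⟨a, ha, hva⟩ := hbs hv
    exact ⟨a, ha, hva⟩
  let g : (Fin (2 ^ (d - 1)) → ZMod 2) → ℕ :=
    fun v => if h : ∃ a ∈ S, vecOf d a = v then h.choose else 0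
  have hg : ∀ v ∈ b, g v ∈ S ∧ vecOf d (g v) = v := by
    intro v hv
    have h : ∃ a ∈ S, vecOf d a = v := hex v hv
    simp only [g, dif_pos h]
    exact ⟨h.choose_spec.1, h.choose_spec.2⟩
  refine ⟨b.toFinset.image g, ?_, ?_, ?_, ?_⟩
  · intro x hx
    rw [Finset.mem_image] at hx
    obtain ⟨v, hv, rfl⟩ := hx
    exact (hg v (Set.mem_toFinset.1 hv)).1
  · rw [Finset.card_image_of_injOn, Set.toFinset_card, hcardb]
    intro v hv w hw hgvw
    have h1 := (hg v (Set.mem_toFinset.1 hv)).2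
    have h2 := (hg w (Set.mem_toFinset.1 hw)).2
    rw [← h1, ← h2, hgvw]
  · have himg : vecOf d '' ((b.toFinset.image g : Finset ℕ) : Set ℕ) = b := by
      ext v
      constructor
      · rintro ⟨x, hx, rfl⟩
        simp only [Finset.coe_image, Set.mem_image, Finset.mem_coe] at hx
        obtain ⟨w, hw, rfl⟩ := hx
        rw [(hg w (Set.mem_toFinset.1 hw)).2]
        exact Set.mem_toFinset.1 hw
      · intro hv
        refine ⟨g v, ?_, (hg v hv).2⟩
        simp only [Finset.coe_image, Set.mem_image, Finset.mem_coe]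
        exact ⟨v, Set.mem_toFinset.2 hv, rfl⟩
    unfold TDecodable
    rw [himg, hspan]
  · have h0 : (0 : ℕ) ∉ b.toFinset.image g := by
      intro h
      rw [Finset.mem_image] at h
      obtain ⟨v, hv, hgv⟩ := h
      have := (hg v (Set.mem_toFinset.1 hv)).1
      rw [hgv] at this
      have := hS this
      simp [treeVerts] at this
    have hne : (b.toFinset.image g).Nonempty := by
      rw [← Finset.card_pos, Finset.card_image_of_injOn, Set.toFinset_card, hcardb]
      · positivity
      · intro v hv w hw hgvw
        have h1 := (hg v (Set.mem_toFinset.1 hv)).2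
        have h2 := (hg w (Set.mem_toFinset.1 hw)).2
        rw [← h1, ← h2, hgvw]
    have hb := cost_bound d (b.toFinset.image g) h0 hne
    rw [Finset.card_image_of_injOn, Set.toFinset_card, hcardb] at hb
    · exact hb
    · intro v hv w hw hgvw
      have h1 := (hg v (Set.mem_toFinset.1 hv)).2
      have h2 := (hg w (Set.mem_toFinset.1 hw)).2
      rw [← h1, ← h2, hgvw]

end Treeplication
end
end

section
/- For every integer d ≥ 1, the Treeplication tree T_d can be partitioned into a diagonal cover consisting of exactly 2^{d-1} diagonals, of which exactly one diagonal has size d and, for each i ∈ {1,…,d−1}, exactly 2^{d-i-1} diagonals have size i. -/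
open scoped Classical
noncomputable section

namespace Treeplication

/-- A diagonal of `T_d`: a set of vertices forming a downward path starting at some
vertex and ending at a leaf (possibly a single leaf); the path from its top vertex
`y/2^t` down to the leaf `y` consists of the vertices `y/2^s`, `s = 0,…,t`. -/
def IsDiagonal (d : ℕ) (g : Finset ℕ) : Prop :=
  ∃ y t, IsLeaf d y ∧ t < d ∧ g = Finset.image (fun s => y / 2 ^ s) (Finset.range (t + 1))

/-! ### Auxiliary machinery -/

instance : Fact (Nat.Prime 2) := ⟨Nat.prime_two⟩

/-- The diagonal attached to leaf `y`: go up while being a left child. -/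
def diagOf (y : ℕ) : Finset ℕ :=
  Finset.image (fun s => y / 2 ^ s) (Finset.range (padicValNat 2 y + 1))

lemma mem_diagOf {y v : ℕ} (hy : y ≠ 0) :
    v ∈ diagOf y ↔ ∃ s, v * 2 ^ s = y := by
  constructor
  · intro h
    simp only [diagOf, Finset.mem_image, Finset.mem_range] at h
    obtain ⟨s, hs, rfl⟩ := h
    refine ⟨s, Nat.div_mul_cancel ?_⟩
    exact dvd_trans (pow_dvd_pow 2 (Nat.lt_succ_iff.mp hs)) pow_padicValNat_dvd
  · rintro ⟨s, rfl⟩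
    have hv : v ≠ 0 := by rintro rfl; simp at hy
    have hdvd : (2:ℕ) ^ s ∣ v * 2 ^ s := dvd_mul_left _ _
    have hs : s ≤ padicValNat 2 (v * 2 ^ s) :=
      (padicValNat_dvd_iff_le hy).mp hdvd
    simp only [diagOf, Finset.mem_image, Finset.mem_range]
    exact ⟨s, Nat.lt_succ_of_le hs, Nat.mul_div_cancel v (by positivity)⟩

lemma val_lt {d y : ℕ} (hd : 1 ≤ d) (h : IsLeaf d y) : padicValNat 2 y < d := by
  have hy : y ≠ 0 := by
    have := h.1; have : (0:ℕ) < 2 ^ (d-1) := by positivity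
    omega
  by_contra hlt
  push_neg at hlt
  have : (2:ℕ) ^ d ∣ y := dvd_trans (pow_dvd_pow 2 hlt) pow_padicValNat_dvd
  have := Nat.le_of_dvd (Nat.pos_of_ne_zero hy) this
  have := h.2
  omega

lemma s_unique {d v s s' : ℕ} (hv : 1 ≤ v)
    (h1 : IsLeaf d (v * 2 ^ s)) (h2 : IsLeaf d (v * 2 ^ s')) : s = s' := by
  by_contra hne
  wlog hss : s < s' generalizing s s'
  · exact this h2 h1 (Ne.symm hne) (by omega)
  have hd : 1 ≤ d := by
    rcases Nat.eq_zero_or_pos d with h|h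
    · obtain ⟨a, b⟩ := h1; subst h; simp at a b; omega
    · exact h
  have h2d : (2:ℕ)^d = 2^(d-1) * 2 := by
    rw [← pow_succ]; congr 1; omega
  have : v * 2 ^ s' ≥ v * 2 ^ s * 2 := by
    have : (2:ℕ)^s * 2 ≤ 2^s' := by
      calc (2:ℕ)^s * 2 = 2^(s+1) := by rw [pow_succ]
      _ ≤ 2^s' := Nat.pow_le_pow_right (by norm_num) (by omega)
    nlinarith
  have := h1.1; have := h2.2
  omega

lemma leaf_ne_zero {d y : ℕ} (h : IsLeaf d y) : y ≠ 0 := by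
  have := h.1; have : (0:ℕ) < 2 ^ (d-1) := by positivity
  omega

lemma mem_self_diagOf {d y : ℕ} (h : IsLeaf d y) : y ∈ diagOf y :=
  (mem_diagOf (leaf_ne_zero h)).mpr ⟨0, by ring⟩

lemma diagOf_disjoint {d y y' : ℕ} (hy : IsLeaf d y) (hy' : IsLeaf d y')
    (hne : y ≠ y') : Disjoint (diagOf y) (diagOf y') := by
  rw [Finset.disjoint_left]
  intro v hv hv'
  obtain ⟨s, hs⟩ := (mem_diagOf (leaf_ne_zero hy)).mp hv
  obtain ⟨s', hs'⟩ := (mem_diagOf (leaf_ne_zero hy')).mp hv'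
  have hv1 : 1 ≤ v := by
    rcases Nat.eq_zero_or_pos v with h|h
    · subst h; simp at hs; exact absurd hs.symm (leaf_ne_zero hy)
    · exact h
  have : s = s' := s_unique hv1 (hs ▸ hy) (hs' ▸ hy')
  subst this
  exact hne (hs ▸ hs' ▸ rfl)

lemma card_diagOf {d y : ℕ} (h : IsLeaf d y) :
    (diagOf y).card = padicValNat 2 y + 1 := by
  rw [diagOf, Finset.card_image_of_injOn, Finset.card_range]
  intro s hs s' hs' heq
  simp only [Finset.mem_coe, Finset.mem_range, Nat.lt_succ_iff] at hs hs'
  have h1 : y / 2 ^ s * 2 ^ s = y :=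
    Nat.div_mul_cancel (dvd_trans (pow_dvd_pow 2 hs) pow_padicValNat_dvd)
  have h2 : y / 2 ^ s' * 2 ^ s' = y :=
    Nat.div_mul_cancel (dvd_trans (pow_dvd_pow 2 hs') pow_padicValNat_dvd)
  rw [show y / 2^s = y / 2^s' from heq] at h1
  have hv : 0 < y / 2 ^ s' := by
    rcases Nat.eq_zero_or_pos (y / 2 ^ s') with hh|hh
    · rw [hh] at h2; simp at h2; exact absurd h2.symm (leaf_ne_zero h)
    · exact hh
  have : (2:ℕ) ^ s = 2 ^ s' := Nat.eq_of_mul_eq_mul_left hv (h1.trans h2.symm)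
  exact Nat.pow_right_injective (by norm_num) this

lemma leaves_mem_iff {d y : ℕ} : y ∈ Finset.Ico (2^(d-1)) (2^d) ↔ IsLeaf d y := by
  simp [IsLeaf, Finset.mem_Ico]

lemma diagOf_injOn {d : ℕ} :
    Set.InjOn diagOf (Finset.Ico (2^(d-1)) (2^d) : Finset ℕ) := by
  intro y hy y' hy' heq
  rw [Finset.mem_coe, leaves_mem_iff] at hy hy'
  by_contra hne
  exact Finset.disjoint_left.mp (diagOf_disjoint hy hy' hne)
    (mem_self_diagOf hy) (heq ▸ mem_self_diagOf hy)


lemma count_top {d : ℕ} (hd : 1 ≤ d) :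
    ((Finset.Ico (2^(d-1)) (2^d)).filter (fun y => padicValNat 2 y = d - 1))
      = {2^(d-1)} := by
  have hB : (0:ℕ) < 2^(d-1) := by positivity
  have h2d : (2:ℕ)^d = 2^(d-1) * 2 := by rw [← pow_succ]; congr 1; omega
  ext y
  simp only [Finset.mem_filter, Finset.mem_Ico, Finset.mem_singleton]
  constructor
  · rintro ⟨⟨h1, h2⟩, h3⟩
    have hdvd : (2:ℕ)^(d-1) ∣ y := h3 ▸ pow_padicValNat_dvd
    obtain ⟨c, rfl⟩ := hdvd
    have hc1 : 1 ≤ c := by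
      rcases Nat.eq_zero_or_pos c with h|h
      · subst h; simp at h1
      · exact h
    have hc2 : c < 2 := by
      by_contra hc
      push_neg at hc
      have : 2^(d-1) * 2 ≤ 2^(d-1) * c := Nat.mul_le_mul_left _ hc
      omega
    have : c = 1 := by omega
    subst this
    ring
  · rintro rfl
    refine ⟨⟨le_refl _, by omega⟩, padicValNat.prime_pow _⟩

lemma count_val {d k : ℕ} (hk : k + 2 ≤ d) :
    ((Finset.Ico (2^(d-1)) (2^d)).filter (fun y => padicValNat 2 y = k)).card
      = 2^(d-k-2) := by
  have hA : (0:ℕ) < 2^(d-k-2) := by positivity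
  have h2A : (2:ℕ)^(d-k-1) = 2 * 2^(d-k-2) := by rw [← pow_succ']; congr 1; omega
  have h4A : (2:ℕ)^(d-k) = 4 * 2^(d-k-2) := by
    have : (2:ℕ)^(d-k) = 2^2 * 2^(d-k-2) := by rw [← pow_add]; congr 1; omega
    simpa using this
  have hd1 : (2:ℕ)^(d-1) = 2^k * 2^(d-k-1) := by rw [← pow_add]; congr 1; omega
  have hdd : (2:ℕ)^d = 2^k * 2^(d-k) := by rw [← pow_add]; congr 1; omega
  have hkpos : (0:ℕ) < 2^k := by positivity
  have key : (Finset.Ico (2^(d-k-2)) (2^(d-k-1))).card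
      = ((Finset.Ico (2^(d-1)) (2^d)).filter (fun y => padicValNat 2 y = k)).card := by
    refine Finset.card_bij (fun m _ => 2^k * (2*m+1)) ?_ ?_ ?_
    · intro m hm
      rw [Finset.mem_Ico] at hm
      rw [Finset.mem_filter, Finset.mem_Ico]
      refine ⟨⟨?_, ?_⟩, ?_⟩
      · rw [hd1]
        exact Nat.mul_le_mul_left _ (by omega)
      · rw [hdd]
        exact (Nat.mul_lt_mul_left hkpos).mpr (by omega)
      · rw [padicValNat.mul (by positivity) (by omega), padicValNat.prime_pow,
          padicValNat.eq_zero_of_not_dvd (by omega), Nat.add_zero]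
    · intro m₁ h₁ m₂ h₂ heq
      have := Nat.eq_of_mul_eq_mul_left hkpos heq
      omega
    · intro y hy
      rw [Finset.mem_filter, Finset.mem_Ico] at hy
      obtain ⟨⟨h1, h2⟩, h3⟩ := hy
      have hy0 : y ≠ 0 := by
        rintro rfl
        have hp : (0:ℕ) < 2^(d-1) := by positivity
        exact absurd h1 hp.not_ge
      have hdvd : (2:ℕ)^k ∣ y := h3 ▸ pow_padicValNat_dvd
      obtain ⟨m0, hy0'⟩ := hdvd
      have hodd : m0 % 2 = 1 := by
        rcases Nat.even_or_odd m0 with he|ho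
        · exfalso
          obtain ⟨m', hm'⟩ := he
          have hdd2 : (2:ℕ)^(k+1) ∣ y := ⟨m', by rw [hy0', hm', pow_succ]; ring⟩
          have hle := (padicValNat_dvd_iff_le hy0).mp hdd2
          omega
        · exact Nat.odd_iff.mp ho
      have hb1 : 2^(d-k-1) ≤ m0 := by
        rw [hd1, hy0'] at h1
        exact Nat.le_of_mul_le_mul_left h1 hkpos
      have hb2 : m0 < 2^(d-k) := by
        rw [hdd, hy0'] at h2
        exact Nat.lt_of_mul_lt_mul_left h2
      refine ⟨m0 / 2, ?_, ?_⟩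
      · rw [Finset.mem_Ico]
        omega
      · show 2^k * (2*(m0/2)+1) = y
        rw [hy0']
        congr 1
        omega

  rw [← key, Nat.card_Ico]
  omega

lemma filter_card_eq {d i : ℕ} (hd : 1 ≤ d) :
    (((Finset.Ico (2^(d-1)) (2^d)).image diagOf).filter (fun g => g.card = i))
      = ((Finset.Ico (2^(d-1)) (2^d)).filter
          (fun y => padicValNat 2 y + 1 = i)).image diagOf := by
  ext g
  simp only [Finset.mem_filter, Finset.mem_image]
  constructor
  · rintro ⟨⟨y, hy, rfl⟩, hcard⟩
    exact ⟨y, ⟨hy, (card_diagOf (leaves_mem_iff.mp hy)) ▸ hcard⟩, rfl⟩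
  · rintro ⟨y, ⟨hy, hval⟩, rfl⟩
    exact ⟨⟨y, hy, rfl⟩, (card_diagOf (leaves_mem_iff.mp hy)).trans hval⟩

/-- For every `d ≥ 1`, the Treeplication tree `T_d` can be partitioned
into a diagonal cover consisting of exactly `2^{d-1}` diagonals, of which exactly one
has size `d` and, for each `i ∈ {1,…,d−1}`, exactly `2^{d-i-1}` have size `i`. -/
theorem exists_diagonal_cover (d : ℕ) (hd : 1 ≤ d) :
    ∃ P : Finset (Finset ℕ),
      (∀ g ∈ P, IsDiagonal d g) ∧
      (∀ g ∈ P, ∀ g' ∈ P, g ≠ g' → Disjoint g g') ∧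
      P.sup id = treeVerts d ∧
      P.card = 2 ^ (d - 1) ∧
      (P.filter (fun g => g.card = d)).card = 1 ∧
      (∀ i, 1 ≤ i → i ≤ d - 1 → (P.filter (fun g => g.card = i)).card = 2 ^ (d - i - 1)) := by
  refine ⟨(Finset.Ico (2^(d-1)) (2^d)).image diagOf, ?_, ?_, ?_, ?_, ?_, ?_⟩
  · intro g hg
    obtain ⟨y, hy, rfl⟩ := Finset.mem_image.mp hg
    rw [leaves_mem_iff] at hy
    exact ⟨y, padicValNat 2 y, hy, val_lt hd hy, rfl⟩
  · intro g hg g' hg' hne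
    obtain ⟨y, hy, rfl⟩ := Finset.mem_image.mp hg
    obtain ⟨y', hy', rfl⟩ := Finset.mem_image.mp hg'
    rw [leaves_mem_iff] at hy hy'
    exact diagOf_disjoint hy hy' (fun h => hne (h ▸ rfl))
  · ext v
    rw [Finset.mem_sup]
    simp only [Finset.mem_image, id]
    constructor
    · rintro ⟨g, ⟨y, hy, rfl⟩, hv⟩
      rw [Finset.mem_Ico] at hy
      have hy0 : y ≠ 0 := by
        rintro rfl
        exact absurd hy.1 (by positivity : (0:ℕ) < 2^(d-1)).not_ge
      obtain ⟨s, hs⟩ := (mem_diagOf hy0).mp hv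
      have hv1 : 1 ≤ v := by
        rcases Nat.eq_zero_or_pos v with h|h
        · subst h; simp at hs; omega
        · exact h
      have hle : v ≤ y := by
        calc v = v * 1 := (mul_one v).symm
        _ ≤ v * 2^s := mul_le_mul_right Nat.one_le_two_pow v
        _ = y := hs
      rw [treeVerts, Finset.mem_Ico]
      exact ⟨hv1, lt_of_le_of_lt hle hy.2⟩
    · intro hv
      rw [treeVerts, Finset.mem_Ico] at hv
      obtain ⟨hv1, hv2⟩ := hv
      set L := Nat.log 2 v with hLdef
      have hL1 : 2^L ≤ v := Nat.pow_log_le_self 2 (by omega)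
      have hL2 : v < 2^(L+1) := Nat.lt_pow_succ_log_self (by norm_num) v
      have hLd : L + 1 ≤ d := by
        by_contra h
        push_neg at h
        have : (2:ℕ)^d ≤ 2^L := Nat.pow_le_pow_right (by norm_num) (by omega)
        omega
      set s := d - 1 - L with hsdef
      have hy1 : 2^(d-1) ≤ v * 2^s := by
        calc (2:ℕ)^(d-1) = 2^L * 2^s := by rw [← pow_add]; congr 1; omega
        _ ≤ v * 2^s := mul_le_mul_left hL1 _
      have hy2 : v * 2^s < 2^d := by
        calc v * 2^s < 2^(L+1) * 2^s := mul_lt_mul_of_pos_right hL2 (by positivity)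
        _ = 2^d := by rw [← pow_add]; congr 1; omega
      refine ⟨diagOf (v * 2^s), ⟨v * 2^s, Finset.mem_Ico.mpr ⟨hy1, hy2⟩, rfl⟩, ?_⟩
      exact (mem_diagOf (by positivity)).mpr ⟨s, rfl⟩
  · rw [Finset.card_image_of_injOn diagOf_injOn, Nat.card_Ico]
    have : (2:ℕ)^d = 2^(d-1) * 2 := by rw [← pow_succ]; congr 1; omega
    omega
  · rw [filter_card_eq hd,
      Finset.card_image_of_injOn
        (diagOf_injOn.mono (Finset.coe_subset.mpr (Finset.filter_subset _ _)))]
    have heq : (Finset.Ico (2^(d-1)) (2^d)).filter (fun y => padicValNat 2 y + 1 = d)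
        = (Finset.Ico (2^(d-1)) (2^d)).filter (fun y => padicValNat 2 y = d - 1) := by
      apply Finset.filter_congr
      intro y hy
      constructor <;> intro <;> omega
    rw [heq, count_top hd]
    simp
  · intro i hi1 hi2
    rw [filter_card_eq hd,
      Finset.card_image_of_injOn
        (diagOf_injOn.mono (Finset.coe_subset.mpr (Finset.filter_subset _ _)))]
    have heq : (Finset.Ico (2^(d-1)) (2^d)).filter (fun y => padicValNat 2 y + 1 = i)
        = (Finset.Ico (2^(d-1)) (2^d)).filter (fun y => padicValNat 2 y = i - 1) := by
      apply Finset.filter_congr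
      intro y hy
      constructor <;> intro <;> omega
    rw [heq, count_val (by omega)]
    congr 1
    omega

end Treeplication
end
end

section
/- A Treeplication subset S of T_d is decodable if and only if there exists a diagonal cover of T_d in which every diagonal contains at least one vertex of S. -/
open scoped Classical
noncomputable section

namespace Treeplication

/-! ### Auxiliary definitions -/

/-- ancestor indicator: `u v z = 1` iff `v` is an ancestor-or-equal of `z`. -/
def u (v z : ℕ) : ZMod 2 := if ∃ t : ℕ, z / 2 ^ t = v then 1 else 0

def leavesF (d : ℕ) : Finset ℕ := Finset.Ico (2 ^ (d - 1)) (2 ^ d)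

/-- relative decodability: unit vectors on coordinates in `Y` are spanned. -/
def Dec (S Y : Finset ℕ) : Prop :=
  ∀ z0 ∈ Y, ∃ c : ℕ → ZMod 2, ∀ z ∈ Y,
    (∑ v ∈ S, c v * u v z) = if z = z0 then 1 else 0

/-- relative coverability: a diagonal cover where diagonals meeting `Y` hit `S`. -/
def Cov (d : ℕ) (S Y : Finset ℕ) : Prop :=
  ∃ P : Finset (Finset ℕ),
    (∀ g ∈ P, IsDiagonal d g) ∧
    (∀ g ∈ P, ∀ g' ∈ P, g ≠ g' → Disjoint g g') ∧
    P.sup id = treeVerts d ∧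
    (∀ g ∈ P, ∀ y ∈ g, y ∈ Y → ∃ v ∈ g, v ∈ S)

def Pcond (S Y : Finset ℕ) : Prop :=
  ∀ z1 ∈ Y, z1 ∉ S → ∀ z2 ∈ Y, z2 ∉ S → z1 / 2 = z2 / 2 → z1 = z2

/-! ### Arithmetic helpers -/

lemma div2_pow (z s : ℕ) : z / 2 / 2 ^ s = z / 2 ^ (s + 1) := by
  rw [Nat.div_div_eq_div_mul, ← pow_succ']

lemma u_halve {m v z : ℕ} (hv : v < 2 ^ m) (hz : 2 ^ m ≤ z) : u v z = u v (z / 2) := by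
  unfold u
  have h : (∃ t : ℕ, z / 2 ^ t = v) ↔ ∃ t : ℕ, z / 2 / 2 ^ t = v := by
    constructor
    · rintro ⟨t, ht⟩
      cases t with
      | zero => simp at ht; omega
      | succ r => exact ⟨r, by rw [div2_pow]; exact ht⟩
    · rintro ⟨t, ht⟩
      exact ⟨t + 1, by rw [← div2_pow]; exact ht⟩
  exact if_congr h rfl rfl

lemma u_leaf {m v z : ℕ} (hv : 2 ^ m ≤ v) (hz : z < 2 ^ (m + 1)) :
    u v z = if z = v then 1 else 0 := by
  unfold u
  by_cases h : z = v
  · subst h; rw [if_pos ⟨0, by simp⟩, if_pos rfl]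
  · rw [if_neg, if_neg h]
    rintro ⟨t, ht⟩
    cases t with
    | zero => simp at ht; exact h ht
    | succ r =>
      have h1 : z / 2 ^ (r + 1) ≤ z / 2 := by
        rw [← div2_pow]; exact Nat.div_le_self _ _
      have hp : 2 ^ (m + 1) = 2 * 2 ^ m := by rw [pow_succ']
      omega

/-! ### Diagonal helpers -/

lemma diag_mem_leaf {m y t : ℕ} (hm : 1 ≤ m) (hy : IsLeaf m y) {w : ℕ}
    (hw : w ∈ Finset.image (fun s => y / 2 ^ s) (Finset.range (t + 1)))
    (hwl : 2 ^ (m - 1) ≤ w) : w = y := by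
  simp only [Finset.mem_image, Finset.mem_range] at hw
  obtain ⟨s, _, rfl⟩ := hw
  cases s with
  | zero => simp
  | succ r =>
    exfalso
    have h1 : y / 2 ^ (r + 1) ≤ y / 2 := by
      rw [← div2_pow]; exact Nat.div_le_self _ _
    have hp : 2 ^ m = 2 * 2 ^ (m - 1) := by
      conv_lhs => rw [show m = (m - 1) + 1 by omega]
      rw [pow_succ']
    obtain ⟨hy1, hy2⟩ := hy
    omega

lemma diag_self_mem (y t : ℕ) :
    y ∈ Finset.image (fun s => y / 2 ^ s) (Finset.range (t + 1)) := by
  refine Finset.mem_image.2 ⟨0, by simp, by simp⟩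

lemma diag_sup (y t : ℕ) :
    (Finset.image (fun s => y / 2 ^ s) (Finset.range (t + 1))).sup id = y := by
  apply le_antisymm
  · apply Finset.sup_le
    intro w hw
    simp only [Finset.mem_image, Finset.mem_range] at hw
    obtain ⟨s, _, rfl⟩ := hw
    exact Nat.div_le_self _ _
  · exact Finset.le_sup (f := id) (diag_self_mem y t)



lemma pow_pred (d : ℕ) (hd : 1 ≤ d) : 2 ^ d = 2 * 2 ^ (d - 1) := by
  conv_lhs => rw [show d = (d - 1) + 1 by omega]
  rw [pow_succ']

/-- splitting the spanning sum into small vertices and leaves -/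
lemma sum_split (d : ℕ) (S : Finset ℕ) (hS : S ⊆ treeVerts (d + 1))
    (c : ℕ → ZMod 2) (z : ℕ) (hz1 : 2 ^ d ≤ z) (hz2 : z < 2 ^ (d + 1)) :
    (∑ v ∈ S, c v * u v z) =
      (∑ v ∈ S.filter (· < 2 ^ d), c v * u v (z / 2)) + (if z ∈ S then c z else 0) := by
  rw [← Finset.sum_filter_add_sum_filter_not S (· < 2 ^ d)]
  congr 1
  · apply Finset.sum_congr rfl
    intro v hv
    rw [Finset.mem_filter] at hv
    rw [u_halve hv.2 hz1]
  · have : ∀ v ∈ S.filter (fun v => ¬ v < 2 ^ d), c v * u v z = if z = v then c v else 0 := by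
      intro v hv
      rw [Finset.mem_filter] at hv
      have hv2 : v < 2 ^ (d + 1) := by
        have := hS hv.1; simp only [treeVerts, Finset.mem_Ico] at this; exact this.2
      rw [u_leaf (m := d) (by omega) hz2]
      split <;> simp
    rw [Finset.sum_congr rfl this, Finset.sum_ite_eq]
    have : z ∈ S.filter (fun v => ¬ v < 2 ^ d) ↔ z ∈ S := by
      simp only [Finset.mem_filter]
      constructor
      · exact fun h => h.1
      · exact fun h => ⟨h, by omega⟩
    simp only [this]

lemma dec_step (d : ℕ) (S Y : Finset ℕ) (hS : S ⊆ treeVerts (d + 1))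
    (hY : Y ⊆ leavesF (d + 1)) :
    Dec S Y ↔ Pcond S Y ∧ Dec (S.filter (· < 2 ^ d)) ((Y \ S).image (· / 2)) := by
  have hYb : ∀ z ∈ Y, 2 ^ d ≤ z ∧ z < 2 ^ (d + 1) := by
    intro z hz
    have := hY hz
    simpa only [leavesF, Nat.add_sub_cancel, Finset.mem_Ico] using this
  constructor
  · intro hDec
    have hP : Pcond S Y := by
      intro z1 h1Y h1S z2 h2Y h2S heq
      by_contra hne
      obtain ⟨c, hc⟩ := hDec z1 h1Y
      have e1 := hc z1 h1Y
      have e2 := hc z2 h2Y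
      rw [sum_split d S hS c z1 (hYb z1 h1Y).1 (hYb z1 h1Y).2] at e1
      rw [sum_split d S hS c z2 (hYb z2 h2Y).1 (hYb z2 h2Y).2] at e2
      rw [if_neg h1S, if_pos rfl, add_zero] at e1
      rw [if_neg h2S, if_neg (fun h => hne h.symm), add_zero, ← heq] at e2
      rw [e1] at e2
      exact one_ne_zero e2
    refine ⟨hP, ?_⟩
    intro y0 hy0
    obtain ⟨z0, hz0, rfl⟩ := Finset.mem_image.1 hy0
    rw [Finset.mem_sdiff] at hz0
    obtain ⟨c, hc⟩ := hDec z0 hz0.1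
    refine ⟨c, ?_⟩
    intro y hy
    obtain ⟨z, hz, rfl⟩ := Finset.mem_image.1 hy
    rw [Finset.mem_sdiff] at hz
    have := hc z hz.1
    rw [sum_split d S hS c z (hYb z hz.1).1 (hYb z hz.1).2, if_neg hz.2, add_zero] at this
    rw [this]
    have : z = z0 ↔ z / 2 = z0 / 2 := by
      constructor
      · rintro rfl; rfl
      · exact fun h => hP z hz.1 hz.2 z0 hz0.1 hz0.2 h
    exact if_congr this rfl rfl
  · rintro ⟨hP, hDec'⟩ z0 hz0Y
    by_cases hz0S : z0 ∈ S
    · refine ⟨fun v => if v = z0 then 1 else 0, ?_⟩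
      intro z hz
      rw [sum_split d S hS _ z (hYb z hz).1 (hYb z hz).2]
      have h1 : (∑ v ∈ S.filter (· < 2 ^ d), (if v = z0 then (1:ZMod 2) else 0) * u v (z / 2)) = 0 := by
        apply Finset.sum_eq_zero
        intro v hv
        rw [Finset.mem_filter] at hv
        rw [if_neg (by have := (hYb z0 hz0Y).1; omega), zero_mul]
      rw [h1, zero_add]
      by_cases hzz : z = z0
      · subst hzz; rw [if_pos hz0S, if_pos rfl]
      · rw [if_neg hzz]
        split <;> rfl
    · have hz0 : z0 ∈ Y \ S := Finset.mem_sdiff.2 ⟨hz0Y, hz0S⟩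
      obtain ⟨c', hc'⟩ := hDec' (z0 / 2) (Finset.mem_image_of_mem _ hz0)
      set g : ℕ → ZMod 2 := fun w => ∑ v ∈ S.filter (· < 2 ^ d), c' v * u v (w / 2) with hg
      refine ⟨fun v => if v < 2 ^ d then c' v else g v, ?_⟩
      intro z hz
      rw [sum_split d S hS _ z (hYb z hz).1 (hYb z hz).2]
      have h1 : (∑ v ∈ S.filter (· < 2 ^ d), (if v < 2 ^ d then c' v else g v) * u v (z / 2)) = g z := by
        apply Finset.sum_congr rfl
        intro v hv
        rw [Finset.mem_filter] at hv
        rw [if_pos hv.2]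
      rw [h1]
      by_cases hzS : z ∈ S
      · rw [if_pos hzS, if_neg (by have := (hYb z hz).1; omega),
          CharTwo.add_self_eq_zero, if_neg (fun h => hz0S (by rw [← h]; exact hzS))]
      · rw [if_neg hzS, add_zero]
        have hzmem : z / 2 ∈ (Y \ S).image (· / 2) :=
          Finset.mem_image_of_mem _ (Finset.mem_sdiff.2 ⟨hz, hzS⟩)
        have h2 : g z = if z / 2 = z0 / 2 then 1 else 0 := hc' (z / 2) hzmem
        rw [h2]
        have hiff : z / 2 = z0 / 2 ↔ z = z0 := by
          constructor
          · exact fun h => hP z hz hzS z0 hz0Y hz0S h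
          · rintro rfl; rfl
        exact if_congr hiff rfl rfl


/-- The intersection of a diagonal of `T_{d+1}` with `treeVerts d` is its upper part. -/
lemma inter_diag (d : ℕ) (z t : ℕ) (hz1 : 2 ^ d ≤ z) (hz2 : z < 2 ^ (d + 1)) (ht : t ≤ d) :
    (Finset.image (fun s => z / 2 ^ s) (Finset.range (t + 1))) ∩ treeVerts d =
      Finset.image (fun s => z / 2 / 2 ^ s) (Finset.range t) := by
  ext w
  simp only [Finset.mem_inter, Finset.mem_image, Finset.mem_range, treeVerts, Finset.mem_Ico]
  constructor
  · rintro ⟨⟨s, hs, rfl⟩, hw1, hw2⟩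
    cases s with
    | zero => exfalso; simp at hw2; omega
    | succ r => exact ⟨r, by omega, by rw [div2_pow]⟩
  · rintro ⟨s, hs, rfl⟩
    rw [div2_pow]
    refine ⟨⟨s + 1, by omega, rfl⟩, ?_, ?_⟩
    · have h1 : 2 ^ (s + 1) ≤ 2 ^ d := Nat.pow_le_pow_right (by norm_num) (by omega)
      exact Nat.one_le_div_iff (by positivity) |>.2 (by omega)
    · have h2 : z / 2 ^ (s + 1) ≤ z / 2 := by
        rw [← div2_pow]; exact Nat.div_le_self _ _
      have hp : 2 ^ (d + 1) = 2 * 2 ^ d := by rw [pow_succ']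
      omega

lemma cov_step_mp (d : ℕ) (hd : 1 ≤ d) (S Y : Finset ℕ)
    (hY : Y ⊆ leavesF (d + 1)) (hC : Cov (d + 1) S Y) :
    Pcond S Y ∧ Cov d (S.filter (· < 2 ^ d)) ((Y \ S).image (· / 2)) := by
  obtain ⟨P, hdiag, hdisj, hsup, hhit⟩ := hC
  have hYb : ∀ z ∈ Y, 2 ^ d ≤ z ∧ z < 2 ^ (d + 1) := by
    intro z hz
    have := hY hz
    simpa only [leavesF, Nat.add_sub_cancel, Finset.mem_Ico] using this
  -- every vertex is in some diagonal
  have memP : ∀ v ∈ treeVerts (d + 1), ∃ g ∈ P, v ∈ g := by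
    intro v hv
    rw [← hsup] at hv
    exact Finset.mem_sup.1 hv
  have uniq : ∀ g ∈ P, ∀ g' ∈ P, ∀ v, v ∈ g → v ∈ g' → g = g' := by
    intro g hg g' hg' v hv hv'
    by_contra hne
    exact Finset.disjoint_left.1 (hdisj g hg g' hg' hne) hv hv'
  -- the diagonal containing a leaf z of T_{d+1} has z as its end leaf
  have leafend : ∀ g ∈ P, ∀ z ∈ g, 2 ^ d ≤ z →
      ∃ t ≤ d, g = Finset.image (fun s => z / 2 ^ s) (Finset.range (t + 1)) := by
    intro g hg z hzg hz
    obtain ⟨y, t, hy, ht, rfl⟩ := hdiag g hg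
    have : z = y := diag_mem_leaf (by omega) hy hzg hz
    subst this
    exact ⟨t, by omega, rfl⟩
  -- a diagonal containing a leaf z ∈ Y \ S must contain z/2
  have half_mem : ∀ z ∈ Y, z ∉ S → ∀ g ∈ P, z ∈ g → z / 2 ∈ g := by
    intro z hzY hzS g hg hzg
    obtain ⟨t, ht, rfl⟩ := leafend g hg z hzg (hYb z hzY).1
    cases t with
    | zero =>
      exfalso
      obtain ⟨v, hvg, hvS⟩ := hhit _ hg z hzg hzY
      simp only [zero_add, Finset.range_one, Finset.image_singleton, pow_zero, Nat.div_one,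
        Finset.mem_singleton] at hvg
      exact hzS (hvg ▸ hvS)
    | succ r =>
      exact Finset.mem_image.2 ⟨1, Finset.mem_range.2 (by omega), by norm_num⟩
  have hP : Pcond S Y := by
    intro z1 h1Y h1S z2 h2Y h2S heq
    by_contra hne
    obtain ⟨g1, hg1, hz1g⟩ := memP z1 (by
      simp only [treeVerts, Finset.mem_Ico]
      have := hYb z1 h1Y
      have h0 : 1 ≤ 2 ^ d := Nat.one_le_two_pow
      omega)
    obtain ⟨g2, hg2, hz2g⟩ := memP z2 (by
      simp only [treeVerts, Finset.mem_Ico]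
      have := hYb z2 h2Y
      have h0 : 1 ≤ 2 ^ d := Nat.one_le_two_pow
      omega)
    have hne12 : g1 ≠ g2 := by
      intro h
      subst h
      obtain ⟨t, ht, hgeq⟩ := leafend g1 hg1 z1 hz1g (hYb z1 h1Y).1
      have : z2 = z1 := diag_mem_leaf (m := d + 1) (by omega)
        ⟨(hYb z1 h1Y).1, (hYb z1 h1Y).2⟩ (hgeq ▸ hz2g)
        ((hYb z2 h2Y).1)
      exact hne this.symm
    have m1 : z1 / 2 ∈ g1 := half_mem z1 h1Y h1S g1 hg1 hz1g
    have m2 : z2 / 2 ∈ g2 := half_mem z2 h2Y h2S g2 hg2 hz2g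
    rw [← heq] at m2
    exact Finset.disjoint_left.1 (hdisj g1 hg1 g2 hg2 hne12) m1 m2
  refine ⟨hP, ?_⟩
  -- build the cover of T_d
  refine ⟨(P.image (fun g => g ∩ treeVerts d)).filter (fun h => h.Nonempty), ?_, ?_, ?_, ?_⟩
  · -- diagonals
    intro h hh
    rw [Finset.mem_filter, Finset.mem_image] at hh
    obtain ⟨⟨g, hg, rfl⟩, hne⟩ := hh
    obtain ⟨y, t, hy, ht, rfl⟩ := hdiag g hg
    rw [inter_diag d y t hy.1 hy.2 (by omega)] at hne ⊢
    cases t with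
    | zero => exact absurd hne (by simp)
    | succ r =>
      refine ⟨y / 2, r, ⟨?_, ?_⟩, by omega, rfl⟩
      · have hp := pow_pred d hd
        have h1 := hy.1
        have h2 : (2:ℕ) ^ (d + 1 - 1) = 2 ^ d := by norm_num
        omega
      · have hp : 2 ^ (d + 1) = 2 * 2 ^ d := by rw [pow_succ']
        have := hy.2
        omega
  · -- disjointness
    intro h1 hh1 h2 hh2 hne
    rw [Finset.mem_filter, Finset.mem_image] at hh1 hh2
    obtain ⟨⟨g1, hg1, rfl⟩, -⟩ := hh1
    obtain ⟨⟨g2, hg2, rfl⟩, -⟩ := hh2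
    have hg12 : g1 ≠ g2 := fun h => hne (by rw [h])
    exact (hdisj g1 hg1 g2 hg2 hg12).mono Finset.inter_subset_left Finset.inter_subset_left
  · -- sup
    apply le_antisymm
    · apply Finset.sup_le
      intro h hh
      rw [Finset.mem_filter, Finset.mem_image] at hh
      obtain ⟨⟨g, hg, rfl⟩, -⟩ := hh
      exact Finset.inter_subset_right
    · intro v hv
      have hv2 : v ∈ treeVerts (d + 1) := by
        simp only [treeVerts, Finset.mem_Ico] at hv ⊢
        have hp : 2 ^ (d + 1) = 2 * 2 ^ d := by rw [pow_succ']
        omega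
      obtain ⟨g, hg, hvg⟩ := memP v hv2
      have hmem : v ∈ g ∩ treeVerts d := Finset.mem_inter.2 ⟨hvg, hv⟩
      exact Finset.mem_sup.2 ⟨g ∩ treeVerts d,
        Finset.mem_filter.2 ⟨Finset.mem_image_of_mem _ hg, ⟨v, hmem⟩⟩, hmem⟩
  · -- hitting
    intro h hh y hyh hyY'
    rw [Finset.mem_filter, Finset.mem_image] at hh
    obtain ⟨⟨g, hg, rfl⟩, -⟩ := hh
    obtain ⟨z, hz, hz2⟩ := Finset.mem_image.1 hyY'
    rw [Finset.mem_sdiff] at hz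
    obtain ⟨gz, hgz, hzgz⟩ := memP z (by
      simp only [treeVerts, Finset.mem_Ico]
      have := hYb z hz.1
      have h0 : 1 ≤ 2 ^ d := Nat.one_le_two_pow
      omega)
    have hym : y ∈ gz := by rw [← hz2]; exact half_mem z hz.1 hz.2 gz hgz hzgz
    have hgeq : g = gz := uniq g hg gz hgz y (Finset.mem_inter.1 hyh).1 hym
    subst hgeq
    obtain ⟨v, hvg, hvS⟩ := hhit g hg z hzgz hz.1
    have hvne : v ≠ z := fun h => hz.2 (h ▸ hvS)
    -- v is in the upper part of g
    obtain ⟨t, ht, hgform⟩ := leafend g hg z hzgz (hYb z hz.1).1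
    have hvsmall : 1 ≤ v ∧ v < 2 ^ d := by
      rw [hgform] at hvg
      simp only [Finset.mem_image, Finset.mem_range] at hvg
      obtain ⟨s, hs, rfl⟩ := hvg
      cases s with
      | zero => exact absurd (by simp) hvne
      | succ r =>
        constructor
        · have h1 : 2 ^ (r + 1) ≤ 2 ^ d := Nat.pow_le_pow_right (by norm_num) (by omega)
          have := (hYb z hz.1).1
          exact Nat.one_le_div_iff (by positivity) |>.2 (by omega)
        · have h2 : z / 2 ^ (r + 1) ≤ z / 2 := by
            rw [← div2_pow]; exact Nat.div_le_self _ _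
          have hp : 2 ^ (d + 1) = 2 * 2 ^ d := by rw [pow_succ']
          have := (hYb z hz.1).2
          omega
    refine ⟨v, Finset.mem_inter.2 ⟨hvg, ?_⟩, Finset.mem_filter.2 ⟨hvS, hvsmall.2⟩⟩
    simp only [treeVerts, Finset.mem_Ico]
    exact hvsmall


section CovMpr
variable (d : ℕ) (S Y : Finset ℕ)

/-- chosen extension leaf for a `T_d`-leaf `y` -/
def eL (y : ℕ) : ℕ := if 2 * y ∈ Y ∧ 2 * y ∉ S then 2 * y else 2 * y + 1
/-- the sibling, which gets a singleton diagonal -/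
def sL (y : ℕ) : ℕ := if 2 * y ∈ Y ∧ 2 * y ∉ S then 2 * y + 1 else 2 * y

lemma eL_div2 (y : ℕ) : eL S Y y / 2 = y := by unfold eL; split <;> omega
lemma sL_div2 (y : ℕ) : sL S Y y / 2 = y := by unfold sL; split <;> omega
lemma eL_ne_sL (y y' : ℕ) : eL S Y y ≠ sL S Y y' := by
  unfold eL sL
  rcases eq_or_ne y y' with rfl | hne
  · split <;> omega
  · split <;> split <;> omega
lemma eL_inj {y y' : ℕ} (h : eL S Y y = eL S Y y') : y = y' := by
  have h1 := eL_div2 S Y y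
  have h2 := eL_div2 S Y y'
  omega
lemma eL_or_sL (y v : ℕ) (h : v = 2 * y ∨ v = 2 * y + 1) :
    v = eL S Y y ∨ v = sL S Y y := by
  unfold eL sL; split <;> omega

lemma eL_bounds (y : ℕ) (h1 : 2 ^ (d - 1) ≤ y) (h2 : y < 2 ^ d) (hd : 1 ≤ d) :
    2 ^ d ≤ eL S Y y ∧ eL S Y y < 2 ^ (d + 1) := by
  have hp := pow_pred d hd
  have hq : 2 ^ (d + 1) = 2 * 2 ^ d := by rw [pow_succ']
  unfold eL; split <;> omega
lemma sL_bounds (y : ℕ) (h1 : 2 ^ (d - 1) ≤ y) (h2 : y < 2 ^ d) (hd : 1 ≤ d) :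
    2 ^ d ≤ sL S Y y ∧ sL S Y y < 2 ^ (d + 1) := by
  have hp := pow_pred d hd
  have hq : 2 ^ (d + 1) = 2 * 2 ^ d := by rw [pow_succ']
  unfold sL; split <;> omega

end CovMpr

lemma cov_step_mpr (d : ℕ) (hd : 1 ≤ d) (S Y : Finset ℕ)
    (hY : Y ⊆ leavesF (d + 1)) (hP : Pcond S Y)
    (hC : Cov d (S.filter (· < 2 ^ d)) ((Y \ S).image (· / 2))) :
    Cov (d + 1) S Y := by
  obtain ⟨P', hdiag', hdisj', hsup', hhit'⟩ := hC
  have hYb : ∀ z ∈ Y, 2 ^ d ≤ z ∧ z < 2 ^ (d + 1) := by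
    intro z hz
    have := hY hz
    simpa only [leavesF, Nat.add_sub_cancel, Finset.mem_Ico] using this
  have hp := pow_pred d hd
  have hq : (2:ℕ) ^ (d + 1) = 2 * 2 ^ d := by rw [pow_succ']
  -- elements of members of P' are in treeVerts d
  have hsub : ∀ h ∈ P', ∀ w ∈ h, 1 ≤ w ∧ w < 2 ^ d := by
    intro h hh w hw
    have : w ∈ P'.sup id := Finset.mem_sup.2 ⟨h, hh, hw⟩
    rw [hsup'] at this
    simpa only [treeVerts, Finset.mem_Ico] using this
  -- each member of P' is a diagonal whose sup is its leaf
  have hform : ∀ h ∈ P', ∃ y t, IsLeaf d y ∧ t < d ∧ h.sup id = y ∧ y ∈ h ∧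
      h = Finset.image (fun s => y / 2 ^ s) (Finset.range (t + 1)) := by
    intro h hh
    obtain ⟨y, t, hy, ht, rfl⟩ := hdiag' h hh
    exact ⟨y, t, hy, ht, diag_sup y t, diag_self_mem y t, rfl⟩
  refine ⟨P'.image (fun h => insert (eL S Y (h.sup id)) h) ∪
    (leavesF d).image (fun y => {sL S Y y}), ?_, ?_, ?_, ?_⟩
  · -- diagonals
    intro g hg
    rw [Finset.mem_union, Finset.mem_image, Finset.mem_image] at hg
    rcases hg with ⟨h, hh, rfl⟩ | ⟨y, hy, rfl⟩
    · obtain ⟨y, t, hy, ht, hsupeq, hymem, hform⟩ := hform h hh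
      rw [hsupeq]
      have hb := eL_bounds d S Y y hy.1 hy.2 hd
      refine ⟨eL S Y y, t + 1, ⟨by simpa using hb.1, hb.2⟩, by omega, ?_⟩
      rw [hform]
      ext w
      simp only [Finset.mem_insert, Finset.mem_image, Finset.mem_range]
      constructor
      · rintro (rfl | ⟨s, hs, rfl⟩)
        · exact ⟨0, by omega, by simp⟩
        · exact ⟨s + 1, by omega, by rw [← div2_pow, eL_div2]⟩
      · rintro ⟨s, hs, rfl⟩
        cases s with
        | zero => left; simp
        | succ r => right; exact ⟨r, by omega, by rw [← div2_pow, eL_div2]⟩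
    · simp only [leavesF, Finset.mem_Ico] at hy
      have hb := sL_bounds d S Y y hy.1 hy.2 hd
      refine ⟨sL S Y y, 0, ⟨by simpa using hb.1, hb.2⟩, by omega, ?_⟩
      simp
  · -- disjointness
    intro g hg g' hg' hne
    rw [Finset.mem_union, Finset.mem_image, Finset.mem_image] at hg hg'
    rw [Finset.disjoint_left]
    rcases hg with ⟨h1, hh1, rfl⟩ | ⟨y1, hy1, rfl⟩ <;>
      rcases hg' with ⟨h2, hh2, rfl⟩ | ⟨y2, hy2, rfl⟩
    · -- A vs A
      obtain ⟨z1, t1, hz1, ht1, hs1, hm1, hf1⟩ := hform h1 hh1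
      obtain ⟨z2, t2, hz2, ht2, hs2, hm2, hf2⟩ := hform h2 hh2
      have hh12 : h1 ≠ h2 := by
        rintro rfl
        exact hne rfl
      have hdj := hdisj' h1 hh1 h2 hh2 hh12
      have hz12 : z1 ≠ z2 := by
        rintro rfl
        exact Finset.disjoint_left.1 hdj hm1 hm2
      intro w hw hw'
      rw [Finset.mem_insert] at hw hw'
      have hb1 := eL_bounds d S Y z1 hz1.1 hz1.2 hd
      have hb2 := eL_bounds d S Y z2 hz2.1 hz2.2 hd
      rcases hw with rfl | hw <;> rcases hw' with he | hw'
      · rw [hs1, hs2] at he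
        exact hz12 (eL_inj S Y he)
      · have := hsub h2 hh2 _ hw'
        rw [hs1] at *
        omega
      · have := hsub h1 hh1 _ hw
        rw [hs2] at he
        subst he
        omega
      · exact Finset.disjoint_left.1 hdj hw hw'
    · -- A vs B
      obtain ⟨z1, t1, hz1, ht1, hs1, hm1, hf1⟩ := hform h1 hh1
      intro w hw hw'
      rw [Finset.mem_insert] at hw
      rw [Finset.mem_singleton] at hw'
      subst hw'
      simp only [leavesF, Finset.mem_Ico] at hy2
      have hb2 := sL_bounds d S Y y2 hy2.1 hy2.2 hd
      rcases hw with he | hw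
      · rw [hs1] at he
        exact eL_ne_sL S Y _ _ he.symm
      · have := hsub h1 hh1 _ hw
        omega
    · -- B vs A
      obtain ⟨z2, t2, hz2, ht2, hs2, hm2, hf2⟩ := hform h2 hh2
      intro w hw hw'
      rw [Finset.mem_singleton] at hw
      subst hw
      rw [Finset.mem_insert] at hw'
      simp only [leavesF, Finset.mem_Ico] at hy1
      have hb1 := sL_bounds d S Y y1 hy1.1 hy1.2 hd
      rcases hw' with he | hw'
      · rw [hs2] at he
        exact eL_ne_sL S Y _ _ he.symm
      · have := hsub h2 hh2 _ hw'
        omega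
    · -- B vs B
      intro w hw hw'
      rw [Finset.mem_singleton] at hw hw'
      subst hw
      have h12 : y1 ≠ y2 := by
        rintro rfl
        exact hne rfl
      have e1 := sL_div2 S Y y1
      have e2 := sL_div2 S Y y2
      omega
  · -- sup
    apply le_antisymm
    · apply Finset.sup_le
      intro g hg
      rw [Finset.mem_union, Finset.mem_image, Finset.mem_image] at hg
      rcases hg with ⟨h, hh, rfl⟩ | ⟨y, hy, rfl⟩
      · intro w hw
        simp only [id_eq] at hw
        rw [Finset.mem_insert] at hw
        simp only [treeVerts, Finset.mem_Ico]
        obtain ⟨z, t, hz, ht, hs, hm, hf⟩ := hform h hh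
        rcases hw with rfl | hw
        · rw [hs]
          have hb := eL_bounds d S Y z hz.1 hz.2 hd
          have h0 : 1 ≤ 2 ^ d := Nat.one_le_two_pow
          omega
        · have := hsub h hh _ hw
          omega
      · intro w hw
        simp only [id_eq] at hw
        rw [Finset.mem_singleton] at hw
        subst hw
        simp only [leavesF, Finset.mem_Ico] at hy
        have hb := sL_bounds d S Y y hy.1 hy.2 hd
        simp only [treeVerts, Finset.mem_Ico]
        have h0 : 1 ≤ 2 ^ d := Nat.one_le_two_pow
        omega
    · intro v hv
      simp only [treeVerts, Finset.mem_Ico] at hv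
      rw [Finset.mem_sup]
      by_cases hvs : v < 2 ^ d
      · have : v ∈ P'.sup id := by
          rw [hsup']
          simp only [treeVerts, Finset.mem_Ico]
          omega
        obtain ⟨h, hh, hvh⟩ := Finset.mem_sup.1 this
        exact ⟨insert (eL S Y (h.sup id)) h,
          Finset.mem_union_left _ (Finset.mem_image_of_mem _ hh),
          Finset.mem_insert_of_mem hvh⟩
      · -- v is a leaf of T_{d+1}
        set y := v / 2 with hy
        have hyb : 2 ^ (d - 1) ≤ y ∧ y < 2 ^ d := by omega
        have hv2 : v = 2 * y ∨ v = 2 * y + 1 := by omega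
        by_cases hve : v = eL S Y y
        · -- find the diagonal of P' ending at y
          have : y ∈ P'.sup id := by
            rw [hsup']
            simp only [treeVerts, Finset.mem_Ico]
            have h0 : 1 ≤ 2 ^ (d-1) := Nat.one_le_two_pow
            omega
          obtain ⟨h, hh, hyh⟩ := Finset.mem_sup.1 this
          obtain ⟨z, t, hz, ht, hs, hm, hf⟩ := hform h hh
          have : y = z := by
            rw [hf] at hyh
            exact diag_mem_leaf hd hz hyh hyb.1
          refine ⟨insert (eL S Y (h.sup id)) h,
            Finset.mem_union_left _ (Finset.mem_image_of_mem _ hh), ?_⟩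
          rw [hs, ← this, ← hve]
          exact Finset.mem_insert_self v _
        · have hvs' : v = sL S Y y := (eL_or_sL S Y y v hv2).resolve_left hve
          refine ⟨{sL S Y y}, Finset.mem_union_right _ (Finset.mem_image_of_mem _ ?_),
            by simp only [id_eq, Finset.mem_singleton]; exact hvs'⟩
          simp only [leavesF, Finset.mem_Ico]
          exact hyb
  · -- hitting
    intro g hg z hzg hzY
    have hzb := hYb z hzY
    rw [Finset.mem_union, Finset.mem_image, Finset.mem_image] at hg
    rcases hg with ⟨h, hh, rfl⟩ | ⟨y, hy, rfl⟩
    · obtain ⟨z0, t, hz0, ht, hs, hm, hf⟩ := hform h hh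
      rw [Finset.mem_insert] at hzg
      rcases hzg with rfl | hzh
      · -- z = eL (h.sup id)
        by_cases hzS : eL S Y (h.sup id) ∈ S
        · exact ⟨_, Finset.mem_insert_self _ _, hzS⟩
        · have hyY' : h.sup id ∈ (Y \ S).image (· / 2) := by
            refine Finset.mem_image.2 ⟨eL S Y (h.sup id), Finset.mem_sdiff.2 ⟨hzY, hzS⟩, ?_⟩
            exact eL_div2 S Y _
          obtain ⟨v, hvh, hvS⟩ := hhit' h hh (h.sup id) (hs ▸ hm) hyY'
          exact ⟨v, Finset.mem_insert_of_mem hvh, (Finset.mem_filter.1 hvS).1⟩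
      · exfalso
        have := hsub h hh _ hzh
        omega
    · rw [Finset.mem_singleton] at hzg
      subst hzg
      refine ⟨sL S Y y, Finset.mem_singleton_self _, ?_⟩
      by_contra hns
      -- sL y ∈ Y \ S; contradiction with Pcond / definition of eL
      simp only [leavesF, Finset.mem_Ico] at hy
      unfold sL at hzY hns
      by_cases hc : 2 * y ∈ Y ∧ 2 * y ∉ S
      · rw [if_pos hc] at hzY hns
        have := hP (2 * y) hc.1 hc.2 (2 * y + 1) hzY hns (by omega)
        omega
      · rw [if_neg hc] at hzY hns
        exact hc ⟨hzY, hns⟩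


lemma u_one_one : u 1 1 = 1 := by
  unfold u
  rw [if_pos ⟨0, by norm_num⟩]

lemma base_case (S Y : Finset ℕ) (hS : S ⊆ treeVerts 1) (hY : Y ⊆ leavesF 1) :
    Dec S Y ↔ Cov 1 S Y := by
  have hS1 : ∀ x ∈ S, x = 1 := by
    intro x hx
    have := hS hx
    simp only [treeVerts, Finset.mem_Ico] at this
    omega
  have hY1 : ∀ x ∈ Y, x = 1 := by
    intro x hx
    have := hY hx
    simp only [leavesF, pow_zero, pow_one, Finset.mem_Ico] at this
    omega
  have key : (Dec S Y ↔ (1 ∈ Y → 1 ∈ S)) ∧ (Cov 1 S Y ↔ (1 ∈ Y → 1 ∈ S)) := by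
    constructor
    · constructor
      · intro hD h1Y
        obtain ⟨c, hc⟩ := hD 1 h1Y
        have := hc 1 h1Y
        rw [if_pos rfl] at this
        by_contra h1S
        have hSe : S = ∅ := by
          rw [Finset.eq_empty_iff_forall_notMem]
          intro x hx
          exact h1S (hS1 x hx ▸ hx)
        rw [hSe, Finset.sum_empty] at this
        exact one_ne_zero this.symm
      · intro h z0 hz0
        have hz01 : z0 = 1 := hY1 z0 hz0
        subst hz01
        refine ⟨fun _ => 1, ?_⟩
        intro z hz
        have hz1 : z = 1 := hY1 z hz
        subst hz1
        rw [if_pos rfl]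
        have hSeq : S = {1} := by
          apply Finset.eq_singleton_iff_unique_mem.2
          exact ⟨h hz, hS1⟩
        rw [hSeq, Finset.sum_singleton, one_mul, u_one_one]
    · constructor
      · rintro ⟨P, hdiag, hdisj, hsup, hhit⟩ h1Y
        have h1m : 1 ∈ P.sup id := by
          rw [hsup]; simp [treeVerts]
        obtain ⟨g, hg, h1g⟩ := Finset.mem_sup.1 h1m
        obtain ⟨v, hvg, hvS⟩ := hhit g hg 1 h1g h1Y
        exact (hS1 v hvS) ▸ hvS
      · intro h
        refine ⟨{{1}}, ?_, ?_, ?_, ?_⟩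
        · intro g hg
          rw [Finset.mem_singleton] at hg
          subst hg
          exact ⟨1, 0, ⟨by norm_num, by norm_num⟩, by norm_num, by simp⟩
        · intro g hg g' hg' hne
          rw [Finset.mem_singleton] at hg hg'
          exact absurd (hg.trans hg'.symm) hne
        · simp only [Finset.sup_singleton, id_eq]
          ext x
          simp only [Finset.mem_singleton, treeVerts, Finset.mem_Ico]
          omega
        · intro g hg y hyg hyY
          rw [Finset.mem_singleton] at hg
          subst hg
          rw [Finset.mem_singleton] at hyg
          subst hyg
          exact ⟨1, Finset.mem_singleton_self 1, h hyY⟩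
  rw [key.1, key.2]

lemma main_equiv (d : ℕ) (hd : 1 ≤ d) :
    ∀ S Y : Finset ℕ, S ⊆ treeVerts d → Y ⊆ leavesF d → (Dec S Y ↔ Cov d S Y) := by
  induction d, hd using Nat.le_induction with
  | base => exact base_case
  | succ d hd ih =>
    intro S Y hS hY
    have hS' : S.filter (· < 2 ^ d) ⊆ treeVerts d := by
      intro v hv
      rw [Finset.mem_filter] at hv
      have := hS hv.1
      simp only [treeVerts, Finset.mem_Ico] at this ⊢
      exact ⟨this.1, hv.2⟩
    have hY' : (Y \ S).image (· / 2) ⊆ leavesF d := by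
      intro y hy
      obtain ⟨z, hz, rfl⟩ := Finset.mem_image.1 hy
      rw [Finset.mem_sdiff] at hz
      have := hY hz.1
      simp only [leavesF, Nat.add_sub_cancel, Finset.mem_Ico] at this ⊢
      have hp := pow_pred d hd
      have hq : (2:ℕ) ^ (d + 1) = 2 * 2 ^ d := by rw [pow_succ']
      omega
    rw [dec_step d S Y hS hY]
    constructor
    · rintro ⟨hP, hD⟩
      exact cov_step_mpr d hd S Y hY hP ((ih _ _ hS' hY').1 hD)
    · intro hC
      obtain ⟨hP, hC'⟩ := cov_step_mp d hd S Y hY hC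
      exact ⟨hP, (ih _ _ hS' hY').2 hC'⟩


lemma vecOf_apply (d v : ℕ) (j : Fin (2 ^ (d - 1))) :
    vecOf d v j = u v (2 ^ (d - 1) + (j : ℕ)) := rfl

lemma tdec_iff_dec (d : ℕ) (hd : 1 ≤ d) (S : Finset ℕ) :
    TDecodable d S ↔ Dec S (leavesF d) := by
  have hp := pow_pred d hd
  constructor
  · intro hT z0 hz0
    simp only [leavesF, Finset.mem_Ico] at hz0
    have hj0 : z0 - 2 ^ (d - 1) < 2 ^ (d - 1) := by omega
    set j0 : Fin (2 ^ (d - 1)) := ⟨z0 - 2 ^ (d - 1), hj0⟩ with hj0def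
    have hmem : Pi.single j0 (1 : ZMod 2) ∈
        Submodule.span (ZMod 2) (vecOf d '' (S : Set ℕ)) := by
      rw [hT]; exact Submodule.mem_top
    rw [Submodule.mem_span_set'] at hmem
    obtain ⟨n, f, gf, hsum⟩ := hmem
    have hme : ∀ i : Fin n, ∃ x, x ∈ S ∧ vecOf d x = (gf i : Fin (2 ^ (d-1)) → ZMod 2) := by
      intro i
      obtain ⟨x, hx1, hx2⟩ := (gf i).2
      exact ⟨x, hx1, hx2⟩
    choose vv hvvS hvveq using hme
    refine ⟨fun v => ∑ i ∈ Finset.univ.filter (fun i => vv i = v), f i, ?_⟩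
    intro z hz
    simp only [leavesF, Finset.mem_Ico] at hz
    have hjz : z - 2 ^ (d - 1) < 2 ^ (d - 1) := by omega
    set j : Fin (2 ^ (d - 1)) := ⟨z - 2 ^ (d - 1), hjz⟩ with hjdef
    have step1 : (∑ v ∈ S, (∑ i ∈ Finset.univ.filter (fun i => vv i = v), f i) * u v z)
        = ∑ i : Fin n, f i * u (vv i) z := by
      rw [← Finset.sum_fiberwise_of_maps_to (fun i _ => hvvS i)
        (fun i => f i * u (vv i) z)]
      apply Finset.sum_congr rfl
      intro v hv
      rw [Finset.sum_mul]
      apply Finset.sum_congr rfl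
      intro i hi
      rw [Finset.mem_filter] at hi
      rw [hi.2]
    rw [step1]
    have step2 : ∀ i : Fin n, u (vv i) z = (gf i : Fin (2 ^ (d-1)) → ZMod 2) j := by
      intro i
      rw [← hvveq i, vecOf_apply]
      congr 1
      simp only [hjdef]
      omega
    calc ∑ i : Fin n, f i * u (vv i) z
        = ∑ i : Fin n, f i * (gf i : Fin (2 ^ (d-1)) → ZMod 2) j := by
          apply Finset.sum_congr rfl; intro i _; rw [step2]
      _ = (∑ i : Fin n, f i • (gf i : Fin (2 ^ (d-1)) → ZMod 2)) j := by
          rw [Finset.sum_apply]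
          apply Finset.sum_congr rfl
          intro i _
          rw [Pi.smul_apply, smul_eq_mul]
      _ = (Pi.single j0 (1 : ZMod 2) : Fin (2 ^ (d - 1)) → ZMod 2) j := by rw [hsum]
      _ = (if z = z0 then (1 : ZMod 2) else 0) := by
          rw [Pi.single_apply j0 (1 : ZMod 2) j]
          have : j = j0 ↔ z = z0 := by
            rw [Fin.ext_iff]
            simp only [hjdef, hj0def]
            omega
          exact if_congr this rfl rfl
  · intro hDec
    rw [TDecodable, eq_top_iff, ← (Pi.basisFun (ZMod 2) (Fin (2 ^ (d - 1)))).span_eq]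
    apply Submodule.span_le.2
    rintro x ⟨j0, rfl⟩
    rw [Pi.basisFun_apply]
    have hz0 : 2 ^ (d - 1) + (j0 : ℕ) ∈ leavesF d := by
      simp only [leavesF, Finset.mem_Ico]
      have := j0.2
      omega
    obtain ⟨c, hc⟩ := hDec _ hz0
    have key : Pi.single j0 (1 : ZMod 2) = ∑ v ∈ S, c v • vecOf d v := by
      funext j
      rw [Finset.sum_apply]
      have hzj : 2 ^ (d - 1) + (j : ℕ) ∈ leavesF d := by
        simp only [leavesF, Finset.mem_Ico]
        have := j.2
        omega
      have := hc _ hzj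
      calc (Pi.single j0 (1 : ZMod 2) : Fin (2 ^ (d - 1)) → ZMod 2) j
          = (if j = j0 then (1 : ZMod 2) else 0) := Pi.single_apply _ _ _
        _ = (if 2 ^ (d - 1) + (j : ℕ) = 2 ^ (d - 1) + (j0 : ℕ) then (1 : ZMod 2) else 0) := by
            refine if_congr ?_ rfl rfl
            rw [Fin.ext_iff]
            omega
        _ = ∑ v ∈ S, c v * u v (2 ^ (d - 1) + (j : ℕ)) := this.symm
        _ = ∑ v ∈ S, (c v • vecOf d v) j := by
            apply Finset.sum_congr rfl
            intro v _
            rw [Pi.smul_apply, smul_eq_mul, vecOf_apply]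
    rw [key]
    apply Submodule.sum_mem
    intro v hv
    exact Submodule.smul_mem _ _ (Submodule.subset_span ⟨v, hv, rfl⟩)

/-- A Treeplication subset `S` of `T_d` is decodable if and only if
there exists a diagonal cover of `T_d` (a partition of the vertices of `T_d` into
pairwise disjoint diagonals) in which every diagonal contains at least one vertex of
`S`. -/
theorem decodable_iff_diagonal_cover (d : ℕ) (hd : 1 ≤ d) (S : Finset ℕ)
    (hS : S ⊆ treeVerts d) :
    TDecodable d S ↔
      ∃ P : Finset (Finset ℕ),
        (∀ g ∈ P, IsDiagonal d g) ∧
        (∀ g ∈ P, ∀ g' ∈ P, g ≠ g' → Disjoint g g') ∧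
        P.sup id = treeVerts d ∧
        (∀ g ∈ P, ∃ v ∈ g, v ∈ S) := by
  rw [tdec_iff_dec d hd S,
    main_equiv d hd S (leavesF d) hS (Finset.Subset.refl _)]
  constructor
  · rintro ⟨P, h1, h2, h3, h4⟩
    refine ⟨P, h1, h2, h3, ?_⟩
    intro g hg
    obtain ⟨y, t, hy, ht, rfl⟩ := h1 g hg
    refine h4 _ hg y (diag_self_mem y t) ?_
    simp only [leavesF, Finset.mem_Ico]
    exact ⟨hy.1, hy.2⟩
  · rintro ⟨P, h1, h2, h3, h4⟩
    exact ⟨P, h1, h2, h3, fun g hg y _ _ => h4 g hg⟩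


end Treeplication
end
end
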